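/- arXiv:2109.11167 — 6 statements merged into one kernel-verified Lean document; each statement's English description precedes it below -/
import Mathlib

section
/- Let A be a finite set, let S ⊆ A, let P be a nonempty finite set, and for each x ∈ A let V(x) ⊆ P be a subset. Let d ∈ ℝ, let α ∈ ℝ with α ≥ 1, and let f : A × P → ℝ be a function such that 1 ≤ f(x,v) ≤ d for every x ∈ S and every v ∈ P \ V(x). Then |S| ≤ (2/|P|) · Σ_{x∈A} |V(x)| + (1/|P|²) · Σ_{x∈A} ( Σ_{v ∈ P \ V(x)} ( α + (f(x,v) − 1)·(d − f(x,v)) ) )². -/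
/-- **Geometric sieve (combinatorial form).**
`A` is a finite set, `S ⊆ A`, `P` a nonempty finite set, `V x ⊆ P` for each `x ∈ A`,
`d, α ∈ ℝ` with `α ≥ 1`, and `f : A × P → ℝ` satisfies `1 ≤ f(x,v) ≤ d` for `x ∈ S`,
`v ∈ P \ V x`.  Then
`|S| ≤ (2/|P|) Σ_{x∈A} |V x| + (1/|P|²) Σ_{x∈A} (Σ_{v∈P\V x} (α + (f(x,v)−1)(d−f(x,v))))²`. -/
theorem statement0 {ι κ : Type*} [DecidableEq κ]
    (A S : Finset ι) (hSA : S ⊆ A)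
    (P : Finset κ) (hP : P.Nonempty)
    (V : ι → Finset κ) (hV : ∀ x ∈ A, V x ⊆ P)
    (d α : ℝ) (hα : 1 ≤ α)
    (f : ι → κ → ℝ)
    (hf : ∀ x ∈ S, ∀ v ∈ P \ V x, 1 ≤ f x v ∧ f x v ≤ d) :
    (S.card : ℝ) ≤
      (2 / P.card) * ∑ x ∈ A, ((V x).card : ℝ)
        + (1 / (P.card : ℝ) ^ 2) *
            ∑ x ∈ A, (∑ v ∈ P \ V x, (α + (f x v - 1) * (d - f x v))) ^ 2 := by
  have hp : (0:ℝ) < P.card := by exact_mod_cast Finset.card_pos.mpr hP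
  have key : ∀ x ∈ S, (1:ℝ) ≤ (2 / P.card) * ((V x).card : ℝ)
      + (1 / (P.card:ℝ)^2) * (∑ v ∈ P \ V x, (α + (f x v - 1) * (d - f x v)))^2 := by
    intro x hx
    have hVx : V x ⊆ P := hV x (hSA hx)
    have hle : (V x).card ≤ P.card := Finset.card_le_card hVx
    set T := ∑ v ∈ P \ V x, (α + (f x v - 1) * (d - f x v)) with hT
    have hT1 : ((P \ V x).card : ℝ) ≤ T := by
      rw [hT]
      calc ((P \ V x).card : ℝ) = ∑ v ∈ P \ V x, (1:ℝ) := by simp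
        _ ≤ _ := Finset.sum_le_sum (fun v hv => by
            obtain ⟨h1, h2⟩ := hf x hx v hv
            nlinarith)
    have hcard : ((P \ V x).card : ℝ) = (P.card : ℝ) - (V x).card := by
      rw [Finset.card_sdiff_of_subset hVx, Nat.cast_sub hle]
    rw [hcard] at hT1
    have hvle : ((V x).card : ℝ) ≤ (P.card : ℝ) := by exact_mod_cast hle
    rw [div_mul_eq_mul_div, div_mul_eq_mul_div, div_add_div _ _ (ne_of_gt hp)
      (by positivity), le_div_iff₀ (by positivity)]
    have hTsq : ((P.card:ℝ) - (V x).card)^2 ≤ T^2 :=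
      pow_le_pow_left₀ (by linarith) hT1 2
    nlinarith [mul_nonneg hp.le (sq_nonneg ((V x).card:ℝ)),
      mul_le_mul_of_nonneg_left hTsq hp.le]
  have nonneg : ∀ x ∈ A, (0:ℝ) ≤ (2 / P.card) * ((V x).card : ℝ)
      + (1 / (P.card:ℝ)^2) * (∑ v ∈ P \ V x, (α + (f x v - 1) * (d - f x v)))^2 := by
    intro x _; positivity
  calc (S.card : ℝ) = ∑ _x ∈ S, (1:ℝ) := by simp
    _ ≤ ∑ x ∈ S, ((2 / P.card) * ((V x).card : ℝ)
        + (1 / (P.card:ℝ)^2) * (∑ v ∈ P \ V x, (α + (f x v - 1) * (d - f x v)))^2) :=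
        Finset.sum_le_sum key
    _ ≤ ∑ x ∈ A, ((2 / P.card) * ((V x).card : ℝ)
        + (1 / (P.card:ℝ)^2) * (∑ v ∈ P \ V x, (α + (f x v - 1) * (d - f x v)))^2) :=
        Finset.sum_le_sum_of_subset_of_nonneg hSA (fun x hx _ => nonneg x hx)
    _ = _ := by rw [Finset.sum_add_distrib, ← Finset.mul_sum, ← Finset.mul_sum]
end

section
/- Let ℓ ≥ 2 be an integer, let A be a finite set, let S ⊆ A, let P be a finite set with |P| ≥ 2, for each v ∈ P let R(v) ⊆ A be a subset, and let f : A × P → ℤ be a function such that: (a) f(x,v) ∈ {0, ℓ} whenever x ∈ A, v ∈ P and x ∉ R(v); (b) f(x,v) ∈ {0, 1} whenever x ∈ A, v ∈ P and x ∈ R(v); and (c) f(x,v) ≥ 1 for every x ∈ S and every v ∈ P. Then |S| ≤ (ℓ−1)² · |A| / |P| + (2/|P|) · Σ_{x∈A} #{v ∈ P : x ∈ R(v)} + max over pairs v₁ ≠ v₂ in P of | Σ over x ∈ A with x ∉ R(v₁) ∪ R(v₂) of (f(x,v₁) − 1)·(f(x,v₂) − 1) |. -/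
set_option maxHeartbeats 1000000 in
/-- **Geometric sieve for prime degree cyclic covers (combinatorial form).**
The maximum over pairs `v₁ ≠ v₂` in `P` is expressed (equivalently, since the
maximum over a nonempty finite set is attained) by the existence of a pair
`v₁ ≠ v₂` for which the bound holds. -/
theorem statement1 {ι κ : Type*} [DecidableEq ι]
    (ℓ : ℤ) (hℓ : 2 ≤ ℓ)
    (A S : Finset ι) (hSA : S ⊆ A)
    (P : Finset κ) (hP : 2 ≤ P.card)
    (R : κ → Finset ι)
    (f : ι → κ → ℤ)
    (ha : ∀ x ∈ A, ∀ v ∈ P, x ∉ R v → f x v = 0 ∨ f x v = ℓ)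
    (hb : ∀ x ∈ A, ∀ v ∈ P, x ∈ R v → f x v = 0 ∨ f x v = 1)
    (hc : ∀ x ∈ S, ∀ v ∈ P, 1 ≤ f x v) :
    ∃ v₁ ∈ P, ∃ v₂ ∈ P, v₁ ≠ v₂ ∧
      (S.card : ℝ) ≤
        ((ℓ : ℝ) - 1) ^ 2 * A.card / P.card
          + (2 / P.card) * ∑ x ∈ A, ((P.filter fun v => x ∈ R v).card : ℝ)
          + |∑ x ∈ A.filter fun x => x ∉ R v₁ ∧ x ∉ R v₂,
                ((f x v₁ : ℝ) - 1) * ((f x v₂ : ℝ) - 1)| := by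
  classical
  have hL : (1:ℝ) ≤ (ℓ:ℝ) - 1 := by
    have : (2:ℝ) ≤ (ℓ:ℝ) := by exact_mod_cast hℓ
    linarith
  set L : ℝ := (ℓ:ℝ) - 1 with hLdef
  set g : ι → κ → ℝ := fun x v => if x ∈ R v then 0 else (f x v : ℝ) - 1 with hgdef
  set r : ι → ℝ := fun x => ((P.filter fun v => x ∈ R v).card : ℝ) with hrdef
  set p : ℝ := (P.card : ℝ) with hpdef
  set a : ℝ := (A.card : ℝ) with hadef
  set s : ℝ := (S.card : ℝ) with hsdef
  set ρ : ℝ := ∑ x ∈ A, r x with hρdef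
  have hp2 : (2:ℝ) ≤ p := by rw [hpdef]; exact_mod_cast hP
  have hp0 : (0:ℝ) < p := by linarith
  have hsa : s ≤ a := by rw [hsdef, hadef]; exact_mod_cast Finset.card_le_card hSA
  have hs0 : 0 ≤ s := by rw [hsdef]; positivity
  have hr_nonneg : ∀ x, 0 ≤ r x := fun x => by rw [hrdef]; positivity
  have hrP : ∀ x, r x ≤ p := fun x => by
    rw [hrdef, hpdef]
    simp only []
    exact_mod_cast Finset.card_le_card (Finset.filter_subset (fun v => x ∈ R v) P)
  -- r x counts the v ∈ P with x ∈ R v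
  have hcount : ∀ x, ∑ v ∈ P, (if x ∈ R v then (0:ℝ) else 1) = p - r x := by
    intro x
    have h1 : ∑ v ∈ P, (if x ∈ R v then (0:ℝ) else 1)
        = ∑ v ∈ P, ((if x ∈ R v then (1:ℝ) else 1) - (if x ∈ R v then 1 else 0)) := by
      apply Finset.sum_congr rfl; intro v _; by_cases h : x ∈ R v <;> simp [h]
    rw [h1, Finset.sum_sub_distrib]
    simp [Finset.sum_boole, hrdef, hpdef]
  -- squares bound on A
  have hsq : ∀ x ∈ A, ∀ v ∈ P, (g x v)^2 ≤ L^2 * (if x ∈ R v then 0 else 1) := by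
    intro x hx v hv
    by_cases h : x ∈ R v
    · simp [hgdef, h]
    · rcases ha x hx v hv h with h0 | h0 <;>
        · simp only [hgdef, h, if_neg, if_false, h0]
          push_cast
          nlinarith
  -- value on S
  have hSval : ∀ x ∈ S, ∀ v ∈ P, g x v = L * (if x ∈ R v then 0 else 1) := by
    intro x hx v hv
    by_cases h : x ∈ R v
    · simp [hgdef, h]
    · have h1 : 1 ≤ f x v := hc x hx v hv
      rcases ha x (hSA hx) v hv h with h0 | h0
      · exfalso; omega
      · simp [hgdef, h, h0, hLdef]

  -- row sums on S
  have hSsum : ∀ x ∈ S, ∑ v ∈ P, g x v = L * (p - r x) := by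
    intro x hx
    rw [← hcount x, Finset.mul_sum]
    exact Finset.sum_congr rfl fun v hv => hSval x hx v hv
  have hL2 : (1:ℝ) ≤ L^2 := by nlinarith
  -- sum of squares bound on A
  have hsq_sumA : ∀ x ∈ A, ∑ v ∈ P, (g x v)^2 ≤ L^2 * p := by
    intro x hx
    calc ∑ v ∈ P, (g x v)^2 ≤ ∑ v ∈ P, L^2 * (if x ∈ R v then 0 else 1) :=
          Finset.sum_le_sum fun v hv => hsq x hx v hv
      _ = L^2 * (p - r x) := by rw [← Finset.mul_sum, hcount x]
      _ ≤ L^2 * p := by nlinarith [hr_nonneg x]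
  have hEsum : ∑ x ∈ A, ∑ v ∈ P, (g x v)^2 ≤ a * (L^2 * p) := by
    calc ∑ x ∈ A, ∑ v ∈ P, (g x v)^2 ≤ A.card • (L^2*p) :=
          Finset.sum_le_card_nsmul _ _ _ hsq_sumA
      _ = a * (L^2*p) := by rw [nsmul_eq_mul, hadef]
  -- lower bound on sum of squared row sums over S
  have hρS : ∑ x ∈ S, r x ≤ ρ := by
    rw [hρdef]
    exact Finset.sum_le_sum_of_subset_of_nonneg hSA (fun x _ _ => hr_nonneg x)
  have hρ0 : 0 ≤ ρ := by
    rw [hρdef]; exact Finset.sum_nonneg fun x _ => hr_nonneg x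
  have hSqsum : L^2*(s*p^2 - 2*p*ρ) ≤ ∑ x ∈ S, (∑ v ∈ P, g x v)^2 := by
    have per : ∀ x ∈ S, L^2*p^2 - 2*(L^2*p)*r x ≤ (∑ v ∈ P, g x v)^2 := by
      intro x hx
      rw [hSsum x hx]
      nlinarith [sq_nonneg (L * r x)]
    calc L^2*(s*p^2 - 2*p*ρ)
        ≤ L^2*(s*p^2) - 2*(L^2*p)*∑ x ∈ S, r x := by
          nlinarith [mul_le_mul_of_nonneg_left hρS (by nlinarith : (0:ℝ) ≤ 2*(L^2*p))]
      _ = ∑ x ∈ S, (L^2*p^2 - 2*(L^2*p)*r x) := by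
          rw [Finset.sum_sub_distrib, Finset.sum_const, nsmul_eq_mul, ← Finset.mul_sum,
            hsdef]
          ring
      _ ≤ ∑ x ∈ S, (∑ v ∈ P, g x v)^2 := Finset.sum_le_sum per
  have hSsub : ∑ x ∈ S, (∑ v ∈ P, g x v)^2 ≤ ∑ x ∈ A, (∑ v ∈ P, g x v)^2 :=
    Finset.sum_le_sum_of_subset_of_nonneg hSA (fun x _ _ => sq_nonneg _)
  -- the pair sums
  set Sig : κ → κ → ℝ := fun v₁ v₂ => ∑ x ∈ A, g x v₁ * g x v₂ with hSigdef
  have hTeq : (∑ x ∈ A, (∑ v ∈ P, g x v)^2) - (∑ x ∈ A, ∑ v ∈ P, (g x v)^2)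
      = ∑ q ∈ P.offDiag, Sig q.1 q.2 := by
    have e1 : ∑ x ∈ A, (∑ v ∈ P, g x v)^2 = ∑ v₁ ∈ P, ∑ v₂ ∈ P, Sig v₁ v₂ := by
      have h1 : ∀ x, (∑ v ∈ P, g x v)^2 = ∑ v₁ ∈ P, ∑ v₂ ∈ P, g x v₁ * g x v₂ := by
        intro x; rw [sq, Finset.sum_mul_sum]
      rw [Finset.sum_congr rfl fun x _ => h1 x, Finset.sum_comm]
      exact Finset.sum_congr rfl fun v₁ _ => Finset.sum_comm
    have e2 : ∑ x ∈ A, ∑ v ∈ P, (g x v)^2 = ∑ v ∈ P, Sig v v := by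
      rw [Finset.sum_comm]
      exact Finset.sum_congr rfl fun v _ => Finset.sum_congr rfl fun x _ => sq (g x v)
    have e3 : ∑ v₁ ∈ P, ∑ v₂ ∈ P, Sig v₁ v₂
        = ∑ v ∈ P, Sig v v + ∑ q ∈ P.offDiag, Sig q.1 q.2 := by
      rw [← Finset.sum_product', ← Finset.diag_union_offDiag,
        Finset.sum_union (Finset.disjoint_diag_offDiag _), Finset.sum_diag]
    rw [e1, e2, e3]; ring
  have hTlow : L^2*(s*p^2 - 2*p*ρ - a*p) ≤ ∑ q ∈ P.offDiag, Sig q.1 q.2 := by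
    rw [← hTeq]
    nlinarith [hSqsum, hSsub, hEsum]
  -- choose the maximizing off-diagonal pair
  have hne : P.offDiag.Nonempty := by
    rw [← Finset.card_pos, Finset.offDiag_card]
    have : P.card < P.card * P.card := by nlinarith
    omega
  obtain ⟨q, hq, hqmax⟩ := Finset.exists_max_image P.offDiag (fun q => Sig q.1 q.2) hne
  have hcard : (P.offDiag.card : ℝ) = p^2 - p := by
    rw [Finset.offDiag_card, Nat.cast_sub (Nat.le_mul_of_pos_left _ (by omega)), hpdef]
    push_cast; ring
  have hsumM : ∑ x ∈ P.offDiag, Sig x.1 x.2 ≤ (p^2 - p) * Sig q.1 q.2 := by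
    calc ∑ x ∈ P.offDiag, Sig x.1 x.2 ≤ P.offDiag.card • Sig q.1 q.2 :=
          Finset.sum_le_card_nsmul _ _ _ (fun x hx => hqmax x hx)
      _ = (p^2 - p) * Sig q.1 q.2 := by rw [nsmul_eq_mul, hcard]
  obtain ⟨hq1, hq2, hqne⟩ := Finset.mem_offDiag.mp hq
  refine ⟨q.1, hq1, q.2, hq2, hqne, ?_⟩
  set M : ℝ := Sig q.1 q.2 with hMdef
  have hgoal_eq : ∑ x ∈ A.filter (fun x => x ∉ R q.1 ∧ x ∉ R q.2),
      ((f x q.1 : ℝ) - 1) * ((f x q.2 : ℝ) - 1) = M := by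
    have hpt : ∀ x ∈ A, (if x ∉ R q.1 ∧ x ∉ R q.2
        then ((f x q.1 : ℝ) - 1) * ((f x q.2 : ℝ) - 1) else 0) = g x q.1 * g x q.2 := by
      intro x hx
      simp only [hgdef]
      by_cases h1 : x ∈ R q.1 <;> by_cases h2 : x ∈ R q.2 <;>
        simp only [h1, h2, if_true, if_false, not_true, not_false_iff, true_and,
          false_and, and_true, and_false, if_neg, mul_zero, zero_mul]
    rw [Finset.sum_filter, Finset.sum_congr rfl hpt, hMdef, hSigdef]
  rw [hgoal_eq]
  have habs : M ≤ |M| := le_abs_self M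
  have habs0 : 0 ≤ |M| := abs_nonneg M
  have hfin : L ^ 2 * a / p + 2 / p * ρ + |M| = (L^2*a + 2*ρ + p*|M|)/p := by
    field_simp
  rw [hfin, le_div_iff₀ hp0]
  have ha0 : 0 ≤ a := by rw [hadef]; positivity
  by_cases hcase : s*p ≤ a + 2*ρ
  · nlinarith [mul_nonneg hp0.le habs0, mul_nonneg (by nlinarith : (0:ℝ) ≤ L^2 - 1) ha0]
  · push_neg at hcase
    have ht : 0 < s*p - 2*ρ - a := by linarith
    have h1 : p*(s*p - 2*ρ - a) ≤ L^2*(s*p^2 - 2*p*ρ - a*p) := by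
      nlinarith [mul_nonneg (mul_nonneg (by nlinarith : (0:ℝ) ≤ L^2 - 1) hp0.le) ht.le]
    have h2 : p*(s*p-2*ρ-a) ≤ (p^2-p)*M := by linarith [h1, hTlow, hsumM]
    have hpp : 0 < p^2 - p := by
      have hpe : p^2 - p = p*(p-1) := by ring
      rw [hpe]; exact mul_pos hp0 (by linarith)
    have hM0 : 0 < M := by
      by_contra hcon
      push_neg at hcon
      linarith [h2, mul_pos hp0 ht, mul_nonneg hpp.le (neg_nonneg.2 hcon)]
    have h3' : s*p - 2*ρ - a ≤ (p-1) * M := by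
      have e : (p^2-p)*M = p*((p-1)*M) := by ring
      rw [e] at h2
      exact le_of_mul_le_mul_left h2 hp0
    rw [abs_of_pos hM0]
    linarith [h3', hM0, mul_nonneg (by linarith [hL2] : (0:ℝ) ≤ L^2 - 1) ha0]
end

section
/- Let k be a finite field with algebraic closure k̄, let n ≥ 2 be an integer, and let H ∈ k[X_0,…,X_n] be a homogeneous polynomial with char k ∤ deg(H) that is Dwork-regular over k with respect to X_0,…,X_n. Let S ⊆ {0,…,n} with |S| ≥ 2, let f := H_S be the polynomial obtained from H by setting X_i = 0 for every i ∉ S, fix j ∈ S, and let g := f|_{X_j = 1}, regarded as a polynomial over k in the variables (X_i)_{i ∈ S ∖ {j}}. Then: (0) the total degree of g equals deg(H); (i) g is a Deligne polynomial over k; and (ii) the equation g = 0 defines a smooth hypersurface in 𝔸^{|S|−1}_k, i.e., there is no point x ∈ k̄^{S ∖ {j}} at which g and all its partial derivatives vanish simultaneously. -/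
/-- A homogeneous polynomial `H ∈ L[X_i : i ∈ σ]` is *Dwork-regular* over the field `L`
with respect to the coordinates `X_i` if there is no point `x ≠ 0` with coordinates in an
algebraic closure of `L` satisfying `H(x) = 0` and `x_i · (∂H/∂X_i)(x) = 0` for all `i`. -/
def DworkRegular {L : Type*} [Field L] {σ : Type*} (H : MvPolynomial σ L) : Prop :=
  ¬ ∃ x : σ → AlgebraicClosure L, x ≠ 0 ∧
      MvPolynomial.aeval x H = 0 ∧
      ∀ i : σ, x i * MvPolynomial.aeval x (MvPolynomial.pderiv i H) = 0

/-- A polynomial `f` over a field `k` is a *Deligne polynomial* if its total degree `d`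
satisfies `d ≥ 1` and `char k ∤ d`, and the degree-`d` homogeneous component `f_d` of `f`,
together with its partial derivatives, has no common zero in `k̄^r ∖ {0}` (i.e. `f_d = 0`
defines a smooth degree-`d` hypersurface in `ℙ^{r−1}_k`). -/
def IsDelignePoly {k : Type*} [Field k] {σ : Type*} (f : MvPolynomial σ k) : Prop :=
  1 ≤ f.totalDegree ∧ ¬ (ringChar k ∣ f.totalDegree) ∧
    ¬ ∃ x : σ → AlgebraicClosure k, x ≠ 0 ∧
        MvPolynomial.aeval x (MvPolynomial.homogeneousComponent f.totalDegree f) = 0 ∧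
        ∀ i, MvPolynomial.aeval x
          (MvPolynomial.pderiv i (MvPolynomial.homogeneousComponent f.totalDegree f)) = 0

open MvPolynomial

lemma euler_aux {σ : Type*} [Fintype σ] {R : Type*} [CommRing R] {p : MvPolynomial σ R} {m : ℕ}
    (hp : p.IsHomogeneous m) :
    ∑ i, MvPolynomial.X i * MvPolynomial.pderiv i p = (m : MvPolynomial σ R) * p := by
  classical
  have key : ∀ d ∈ p.support, (∑ i : σ, X i * pderiv i (monomial d (coeff d p)))
      = (m : MvPolynomial σ R) * monomial d (coeff d p) := by
    intro d hd
    have hdm : (d.sum fun _ e => e) = m := by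
      have := hp (Finsupp.mem_support_iff.mp hd)
      simpa [Finsupp.weight_apply, Finsupp.sum] using this
    have step : ∀ i : σ, X i * pderiv i (monomial d (coeff d p))
        = monomial d (coeff d p * (d i : R)) := by
      intro i
      rw [pderiv_monomial]
      by_cases h : d i = 0
      · simp [h]
      · rw [X, monomial_mul, one_mul, add_tsub_cancel_of_le
          (Finsupp.single_le_iff.mpr (Nat.one_le_iff_ne_zero.mpr h))]
    simp only [step]
    rw [← map_sum (monomial d), ← Finset.mul_sum]
    have hcast : ∑ i : σ, (d i : R) = (m : R) := by
      rw [← Nat.cast_sum]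
      congr 1
      rw [← hdm, Finsupp.sum_fintype]
      simp
    rw [hcast, show (m : MvPolynomial σ R) = C (m : R) by simp, C_mul_monomial, mul_comm]
  conv_lhs => rw [p.as_sum]
  simp only [map_sum, Finset.mul_sum]
  rw [Finset.sum_comm]
  rw [Finset.sum_congr rfl key, ← Finset.mul_sum, ← p.as_sum]

lemma pderiv_aeval_aux {σ τ : Type*} [DecidableEq σ] [DecidableEq τ] {R : Type*} [CommSemiring R]
    (φ : σ → MvPolynomial τ R) (u : τ → σ)
    (hφ : ∀ (i : σ) (i' : τ), pderiv i' (φ i) = if i = u i' then 1 else 0)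
    (i' : τ) (p : MvPolynomial σ R) :
    pderiv i' (aeval φ p) = aeval φ (pderiv (u i') p) := by
  induction' p using MvPolynomial.induction_on with a p q hp hq p i hp
  · simp
  · simp only [map_add, hp, hq]
  · simp only [map_mul, aeval_X, pderiv_mul, hp, hφ, pderiv_X, Pi.single_apply, map_add,
      apply_ite (aeval φ), map_one, map_zero]

/-- **Slices of a Dwork-regular polynomial are Deligne polynomials**
(Lemma 3.5 of the paper): if `H` is Dwork-regular over the finite field `k` with
`char k ∤ deg H`, `S ⊆ {0,…,n}` has `|S| ≥ 2`, `f = H_S` is obtained by setting `X_i = 0`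
for `i ∉ S`, and `g = f|_{X_j = 1}` for some `j ∈ S`, viewed as a polynomial in the
variables `(X_i)_{i ∈ S ∖ {j}}`, then `deg g = deg H`, `g` is a Deligne polynomial over
`k`, and `g = 0` defines a smooth hypersurface in `𝔸^{|S|−1}_k`. -/
theorem statement5 (k : Type) [Field k] [Fintype k]
    (n : ℕ) (hn : 2 ≤ n) (m : ℕ)
    (H : MvPolynomial (Fin (n + 1)) k)
    (hhom : H.IsHomogeneous m)
    (hchar : ¬ ringChar k ∣ m)
    (hDR : DworkRegular H)
    (S : Finset (Fin (n + 1))) (hS : 2 ≤ S.card)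
    (j : Fin (n + 1)) (hj : j ∈ S)
    (g : MvPolynomial {i : Fin (n + 1) // i ∈ S ∧ i ≠ j} k)
    (hg : g = MvPolynomial.aeval
        (fun i => if h : i ∈ S ∧ i ≠ j
          then MvPolynomial.X (⟨i, h⟩ : {i : Fin (n + 1) // i ∈ S ∧ i ≠ j})
          else if i = j then 1 else 0) H) :
    g.totalDegree = m ∧ IsDelignePoly g ∧
      ¬ ∃ x : {i : Fin (n + 1) // i ∈ S ∧ i ≠ j} → AlgebraicClosure k,
          MvPolynomial.aeval x g = 0 ∧
          ∀ i, MvPolynomial.aeval x (MvPolynomial.pderiv i g) = 0 := by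
  set φ : Fin (n + 1) → MvPolynomial {i : Fin (n + 1) // i ∈ S ∧ i ≠ j} k := (fun i => if h : i ∈ S ∧ i ≠ j
          then MvPolynomial.X (⟨i, h⟩ : {i : Fin (n + 1) // i ∈ S ∧ i ≠ j})
          else if i = j then 1 else 0) with hφdef
  set φ₀ : Fin (n + 1) → MvPolynomial {i : Fin (n + 1) // i ∈ S ∧ i ≠ j} k := (fun i => if h : i ∈ S ∧ i ≠ j
          then MvPolynomial.X (⟨i, h⟩ : {i : Fin (n + 1) // i ∈ S ∧ i ≠ j})
          else 0) with hφ₀def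
  have hmne : m ≠ 0 := fun h => hchar (h ▸ dvd_zero _)
  -- differentiation rules
  have hφd : ∀ (i : Fin (n + 1)) (i' : {i : Fin (n + 1) // i ∈ S ∧ i ≠ j}), pderiv i' (φ i) = if i = ↑i' then 1 else 0 := by
    intro i i'
    by_cases h : i ∈ S ∧ i ≠ j
    · rw [hφdef]
      simp only [dif_pos h, pderiv_X, Pi.single_apply]
      by_cases he : (⟨i, h⟩ : {i : Fin (n + 1) // i ∈ S ∧ i ≠ j}) = i'
      · rw [if_pos he, if_pos (by rw [← he])]
      · rw [if_neg he, if_neg fun e => he (Subtype.ext e)]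
    · have hne : i ≠ ↑i' := fun e => h (e ▸ i'.2)
      rw [hφdef]
      simp only [dif_neg h, if_neg hne]
      split_ifs
      · exact pderiv_one
      · exact map_zero _
  have hφ₀d : ∀ (i : Fin (n + 1)) (i' : {i : Fin (n + 1) // i ∈ S ∧ i ≠ j}), pderiv i' (φ₀ i) = if i = ↑i' then 1 else 0 := by
    intro i i'
    by_cases h : i ∈ S ∧ i ≠ j
    · rw [hφ₀def]
      simp only [dif_pos h, pderiv_X, Pi.single_apply]
      by_cases he : (⟨i, h⟩ : {i : Fin (n + 1) // i ∈ S ∧ i ≠ j}) = i'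
      · rw [if_pos he, if_pos (by rw [← he])]
      · rw [if_neg he, if_neg fun e => he (Subtype.ext e)]
    · have hne : i ≠ ↑i' := fun e => h (e ▸ i'.2)
      rw [hφ₀def]
      simp only [dif_neg h, if_neg hne, map_zero]
  -- evaluation of the composite
  have hY : ∀ (x : {i : Fin (n + 1) // i ∈ S ∧ i ≠ j} → AlgebraicClosure k) (p : MvPolynomial (Fin (n + 1)) k),
      aeval x (aeval φ p) = aeval
        (fun i => if h : i ∈ S ∧ i ≠ j then x ⟨i, h⟩ else if i = j then 1 else 0) p := by
    intro x p
    rw [comp_aeval_apply]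
    have hfun : (fun i => aeval x (φ i)) = (fun i : Fin (n+1) =>
        if h : i ∈ S ∧ i ≠ j then x ⟨i, h⟩ else if i = j then (1:AlgebraicClosure k) else 0) := by
      funext i
      by_cases h : i ∈ S ∧ i ≠ j
      · simp [hφdef, dif_pos h]
      · rw [hφdef]
        simp only [dif_neg h]
        split_ifs <;> simp
    rw [hfun]
  have hY0 : ∀ (x : {i : Fin (n + 1) // i ∈ S ∧ i ≠ j} → AlgebraicClosure k) (p : MvPolynomial (Fin (n + 1)) k),
      aeval x (aeval φ₀ p) = aeval
        (fun i => if h : i ∈ S ∧ i ≠ j then x ⟨i, h⟩ else 0) p := by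
    intro x p
    rw [comp_aeval_apply]
    have hfun : (fun i => aeval x (φ₀ i)) = (fun i : Fin (n+1) =>
        if h : i ∈ S ∧ i ≠ j then x ⟨i, h⟩ else (0:AlgebraicClosure k)) := by
      funext i
      by_cases h : i ∈ S ∧ i ≠ j
      · simp [hφ₀def, dif_pos h]
      · rw [hφ₀def]
        simp only [dif_neg h, map_zero]
    rw [hfun]
  -- homogeneity of the top slice
  have hG0hom : (aeval φ₀ H).IsHomogeneous m := by
    have := hhom.aeval φ₀ (n := 1) (fun i => by
      rw [hφ₀def]
      by_cases h : i ∈ S ∧ i ≠ j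
      · simp only [dif_pos h]; exact isHomogeneous_X _ _
      · simp only [dif_neg h]; exact isHomogeneous_zero _ _ _)
    simpa using this
  -- smoothness of the top slice
  have hsm0 : ¬ ∃ x : {i : Fin (n + 1) // i ∈ S ∧ i ≠ j} → AlgebraicClosure k, x ≠ 0 ∧ aeval x (aeval φ₀ H) = 0 ∧
      ∀ i', aeval x (pderiv i' (aeval φ₀ H)) = 0 := by
    rintro ⟨x, hx0, hxv, hxd⟩
    apply hDR
    refine ⟨fun i => if h : i ∈ S ∧ i ≠ j then x ⟨i, h⟩ else 0, ?_, ?_, ?_⟩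
    · obtain ⟨i', hi'⟩ := Function.ne_iff.mp hx0
      refine Function.ne_iff.mpr ⟨↑i', ?_⟩
      simpa [dif_pos i'.2] using hi'
    · rw [← hY0]; exact hxv
    · intro i
      by_cases h : i ∈ S ∧ i ≠ j
      · have : aeval (fun i => if h : i ∈ S ∧ i ≠ j then x ⟨i, h⟩ else (0:AlgebraicClosure k)) (pderiv i H)
            = aeval x (pderiv (⟨i, h⟩ : {i : Fin (n + 1) // i ∈ S ∧ i ≠ j}) (aeval φ₀ H)) := by
          rw [pderiv_aeval_aux φ₀ (fun i' : {i : Fin (n + 1) // i ∈ S ∧ i ≠ j} => ↑i') hφ₀d ⟨i, h⟩ H, hY0]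
        rw [this, hxd ⟨i, h⟩, mul_zero]
      · simp only [dif_neg h, zero_mul]
  have hG0ne : aeval φ₀ H ≠ 0 := by
    intro h0
    obtain ⟨i0, hi0S, hi0j⟩ := Finset.exists_mem_ne (lt_of_lt_of_le one_lt_two hS) j
    refine hsm0 ⟨fun _ => 1, ?_, by rw [h0, map_zero], fun i' => by rw [h0, map_zero, map_zero]⟩
    intro hh
    exact one_ne_zero (congrFun hh ⟨i0, hi0S, hi0j⟩)
  -- monomial-by-monomial analysis
  classical
  have key : ∀ d ∈ H.support,
      homogeneousComponent m (aeval φ (monomial d (coeff d H))) = aeval φ₀ (monomial d (coeff d H))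
      ∧ (aeval φ (monomial d (coeff d H))).totalDegree ≤ m := by
    intro d hd
    have hdm : ∑ i ∈ d.support, d i = m := by
      have := hhom (Finsupp.mem_support_iff.mp hd)
      simpa [Finsupp.weight_apply, Finsupp.sum] using this
    by_cases hA : ∀ i ∈ d.support, i ∈ S
    · by_cases hjd : j ∈ d.support
      · -- j occurs: φ₀-image is zero, φ-image homogeneous of degree m - d j < m
        have hT0 : aeval φ₀ (monomial d (coeff d H)) = 0 := by
          rw [aeval_monomial]
          simp only [Finsupp.prod]
          rw [Finset.prod_eq_zero hjd (by
            have hne : ¬(j ∈ S ∧ j ≠ j) := fun h => h.2 rfl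
            simp only [hφ₀def, dif_neg hne]
            exact zero_pow (Finsupp.mem_support_iff.mp hjd)), mul_zero]
        have hhT : (aeval φ (monomial d (coeff d H))).IsHomogeneous
            (∑ i ∈ d.support, if i = j then 0 else d i) := by
          rw [aeval_monomial, algebraMap_eq]
          simp only [Finsupp.prod]
          refine IsHomogeneous.C_mul ?_ _
          refine IsHomogeneous.prod _ _ _ (fun i hi => ?_)
          by_cases hij : i = j
          · subst hij
            have hne : ¬(i ∈ S ∧ i ≠ i) := fun h => h.2 rfl
            simpa [hφdef, dif_neg hne] using isHomogeneous_one _ k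
          · have hiSj : i ∈ S ∧ i ≠ j := ⟨hA i hi, hij⟩
            simp only [hφdef, dif_pos hiSj, if_neg hij]
            exact isHomogeneous_X_pow _ _
        have hlt : (∑ i ∈ d.support, if i = j then 0 else d i) < m := by
          have h1 : (∑ i ∈ d.support, if i = j then 0 else d i)
              = ∑ i ∈ d.support.erase j, d i := by
            rw [← Finset.add_sum_erase _ (fun i => if i = j then 0 else d i) hjd, if_pos rfl,
              zero_add]
            exact Finset.sum_congr rfl fun i hi => if_neg (Finset.mem_erase.mp hi).1
          have h2 : d j + ∑ i ∈ d.support.erase j, d i = m := by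
            rw [Finset.add_sum_erase _ _ hjd, hdm]
          have h3 : d j ≠ 0 := Finsupp.mem_support_iff.mp hjd
          omega
        refine ⟨?_, hhT.totalDegree_le.trans hlt.le⟩
        rw [hT0, homogeneousComponent_of_mem ((mem_homogeneousSubmodule _ _).mpr hhT),
          if_neg hlt.ne']
      · -- j does not occur: the two images coincide and are homogeneous of degree m
        have heq : aeval φ (monomial d (coeff d H)) = aeval φ₀ (monomial d (coeff d H)) := by
          rw [aeval_monomial, aeval_monomial]
          simp only [Finsupp.prod]
          congr 1
          refine Finset.prod_congr rfl fun i hi => ?_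
          have hij : i ≠ j := fun e => hjd (e ▸ hi)
          have hiSj : i ∈ S ∧ i ≠ j := ⟨hA i hi, hij⟩
          simp only [hφdef, hφ₀def, dif_pos hiSj]
        have hhT : (aeval φ₀ (monomial d (coeff d H))).IsHomogeneous m := by
          have hmon : (monomial d (coeff d H)).IsHomogeneous m :=
            isHomogeneous_monomial _ (by rwa [Finsupp.degree])
          have := hmon.aeval φ₀ (n := 1) (fun i => by
            rw [hφ₀def]
            by_cases h : i ∈ S ∧ i ≠ j
            · simp only [dif_pos h]; exact isHomogeneous_X _ _
            · simp only [dif_neg h]; exact isHomogeneous_zero _ _ _)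
          simpa using this
        rw [heq]
        refine ⟨?_, hhT.totalDegree_le⟩
        rw [homogeneousComponent_of_mem ((mem_homogeneousSubmodule _ _).mpr hhT), if_pos rfl]
    · -- some variable outside S occurs: both images vanish
        push_neg at hA
        obtain ⟨i0, hi0d, hi0S⟩ := hA
        have hi0j : i0 ≠ j := fun e => hi0S (e ▸ hj)
        have hne : ¬(i0 ∈ S ∧ i0 ≠ j) := fun h => hi0S h.1
        have h1 : aeval φ (monomial d (coeff d H)) = 0 := by
          rw [aeval_monomial]
          simp only [Finsupp.prod]
          rw [Finset.prod_eq_zero hi0d (by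
            simp only [hφdef, dif_neg hne, if_neg hi0j]
            exact zero_pow (Finsupp.mem_support_iff.mp hi0d)), mul_zero]
        have h2 : aeval φ₀ (monomial d (coeff d H)) = 0 := by
          rw [aeval_monomial]
          simp only [Finsupp.prod]
          rw [Finset.prod_eq_zero hi0d (by
            simp only [hφ₀def, dif_neg hne]
            exact zero_pow (Finsupp.mem_support_iff.mp hi0d)), mul_zero]
        rw [h1, h2, map_zero]
        exact ⟨rfl, by simp⟩
  have hgsum : g = ∑ d ∈ H.support, aeval φ (monomial d (coeff d H)) := by
    rw [hg]
    conv_lhs => rw [H.as_sum]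
    rw [map_sum]
  have hG0sum : aeval φ₀ H = ∑ d ∈ H.support, aeval φ₀ (monomial d (coeff d H)) := by
    conv_lhs => rw [H.as_sum]
    rw [map_sum]
  have h4 : homogeneousComponent m g = aeval φ₀ H := by
    rw [hgsum, map_sum, hG0sum]
    exact Finset.sum_congr rfl fun d hd => (key d hd).1
  have h5 : g.totalDegree ≤ m := by
    rw [hgsum]
    exact (totalDegree_finset_sum _ _).trans (Finset.sup_le fun d hd => (key d hd).2)
  have hdeg : g.totalDegree = m := by
    refine le_antisymm h5 (le_of_not_gt fun hlt => hG0ne ?_)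
    rw [← h4, homogeneousComponent_eq_zero _ _ hlt]
  -- part (ii)
  have part2 : ¬ ∃ x : {i : Fin (n + 1) // i ∈ S ∧ i ≠ j} → AlgebraicClosure k, aeval x g = 0 ∧ ∀ i', aeval x (pderiv i' g) = 0 := by
    rintro ⟨x, hx1, hx2⟩
    apply hDR
    set y : Fin (n + 1) → AlgebraicClosure k :=
      fun i => if h : i ∈ S ∧ i ≠ j then x ⟨i, h⟩ else if i = j then 1 else 0 with hydef
    have hyH : aeval y H = 0 := by
      rw [hydef, ← hY, ← hg]
      exact hx1
    have hpd : ∀ i' : {i : Fin (n + 1) // i ∈ S ∧ i ≠ j}, aeval y (pderiv (↑i' : Fin (n + 1)) H) = 0 := by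
      intro i'
      rw [hydef, ← hY, ← pderiv_aeval_aux φ (fun i' : {i : Fin (n + 1) // i ∈ S ∧ i ≠ j} => ↑i') hφd i' H, ← hg]
      exact hx2 i'
    have hne : ∀ i : Fin (n + 1), i ≠ j → y i * aeval y (pderiv i H) = 0 := by
      intro i hij
      by_cases h : i ∈ S ∧ i ≠ j
      · rw [show aeval y (pderiv i H) = 0 from hpd ⟨i, h⟩, mul_zero]
      · rw [hydef]
        simp only [dif_neg h, if_neg hij, zero_mul]
    refine ⟨y, ?_, hyH, ?_⟩
    · intro h0
      have hyj : y j = 1 := by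
        rw [hydef]
        simp [dif_neg (fun h : j ∈ S ∧ j ≠ j => h.2 rfl)]
      rw [h0] at hyj
      exact one_ne_zero hyj.symm
    · intro i
      rcases eq_or_ne i j with rfl | hij
      · have he := congrArg (aeval y) (euler_aux hhom)
        simp only [map_sum, map_mul, aeval_X, map_natCast, hyH, mul_zero] at he
        rw [Finset.sum_eq_single i (fun b _ hb => hne b hb) (by simp)] at he
        exact he
      · exact hne i hij
  refine ⟨hdeg, ⟨?_, ?_, ?_⟩, part2⟩
  · rw [hdeg]; omega
  · rw [hdeg]; exact hchar
  · rw [hdeg, h4]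
    exact hsm0
end

section
/- Let q be an odd prime power, n ≥ 2 an integer, and H ∈ 𝔽_q[T][X_0,…,X_n] a polynomial that is homogeneous of degree m ≥ 2 in X_0,…,X_n and is Dwork-regular over 𝔽_q(T) with respect to X_0,…,X_n. Then there exists a finite set P of monic irreducible polynomials in 𝔽_q[T], depending only on H, such that for every monic irreducible π ∉ P: the reduction H mod π ∈ k_π[X_0,…,X_n] has degree m in X_0,…,X_n, and H mod π is Dwork-regular over the residue field k_π = 𝔽_q[T]/(π) with respect to X_0,…,X_n. -/
open MvPolynomial

/-- Ideal membership for polynomial rings descends along field extensions. -/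
theorem MvPolynomial.descent_span {K F : Type*} [Field K] [Field F] [Algebra K F] {σ : Type*}
    (S : Set (MvPolynomial σ K)) (f : MvPolynomial σ K)
    (hf : MvPolynomial.map (algebraMap K F) f ∈
      Ideal.span (MvPolynomial.map (algebraMap K F) '' S)) :
    f ∈ Ideal.span S := by
  classical
  obtain ⟨p, hp⟩ := (Algebra.linearMap K F).exists_leftInverse_of_injective
    (LinearMap.ker_eq_bot.mpr (algebraMap K F).injective)
  have hpid : ∀ c : K, p (algebraMap K F c) = c := fun c =>
    congrFun (congrArg DFunLike.coe hp) c
  set P : MvPolynomial σ F → MvPolynomial σ K :=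
    fun a => ∑ e ∈ a.support, monomial e (p (coeff e a)) with hPdef
  have hPcoeff : ∀ (a : MvPolynomial σ F) (e : σ →₀ ℕ), coeff e (P a) = p (coeff e a) := by
    intro a e
    rw [hPdef]
    simp only [coeff_sum, coeff_monomial]
    rw [Finset.sum_ite_eq' a.support e (fun x => p (coeff x a))]
    split
    · rfl
    · rw [notMem_support_iff.mp ‹_›, map_zero]
  have hPadd : ∀ a b, P (a + b) = P a + P b := by
    intro a b; apply MvPolynomial.ext; intro e
    simp [hPcoeff, coeff_add]
  have hPmul : ∀ (a : MvPolynomial σ F) (g : MvPolynomial σ K),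
      P (a * MvPolynomial.map (algebraMap K F) g) = P a * g := by
    intro a g
    apply MvPolynomial.ext; intro e
    rw [hPcoeff, coeff_mul, coeff_mul, map_sum]
    apply Finset.sum_congr rfl
    intro x _
    rw [coeff_map, hPcoeff]
    calc p (coeff x.1 a * algebraMap K F (coeff x.2 g))
        = p (coeff x.2 g • coeff x.1 a) := by rw [Algebra.smul_def]; ring_nf
      _ = coeff x.2 g • p (coeff x.1 a) := map_smul p _ _
      _ = p (coeff x.1 a) * coeff x.2 g := by rw [smul_eq_mul, mul_comm]
  have hPmap : ∀ g : MvPolynomial σ K, P (MvPolynomial.map (algebraMap K F) g) = g := by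
    intro g
    apply MvPolynomial.ext; intro e
    rw [hPcoeff, coeff_map, hpid]
  rw [Ideal.span] at hf
  obtain ⟨c, hsupp, hsum⟩ := Submodule.mem_span_set.mp hf
  have : f = P (MvPolynomial.map (algebraMap K F) f) := (hPmap f).symm
  rw [this, ← hsum, Finsupp.sum]
  have hPsum : ∀ (s : Finset (MvPolynomial σ F)) (h : MvPolynomial σ F → MvPolynomial σ F),
      P (∑ g ∈ s, h g) = ∑ g ∈ s, P (h g) := by
    intro s h
    induction s using Finset.induction with
    | empty =>
      apply MvPolynomial.ext; intro e
      simp [hPcoeff]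
    | insert _ _ hni ih => rw [Finset.sum_insert hni, Finset.sum_insert hni, hPadd, ih]
  rw [hPsum]
  apply Ideal.sum_mem
  intro g' hg'
  obtain ⟨g, hgS, rfl⟩ := hsupp hg'
  rw [smul_eq_mul, hPmul]
  exact Ideal.mul_mem_left _ _ (Ideal.subset_span hgS)

/-- A polynomial over a fraction field can be cleared of denominators. -/
theorem MvPolynomial.exists_den {R K : Type*} [CommRing R] [IsDomain R] [Field K] [Algebra R K]
    [IsFractionRing R K] {σ : Type*} (a : MvPolynomial σ K) :
    ∃ d : R, d ≠ 0 ∧ ∃ a' : MvPolynomial σ R,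
      MvPolynomial.map (algebraMap R K) a' = C (algebraMap R K d) * a := by
  classical
  obtain ⟨b, hb⟩ := IsLocalization.exist_integer_multiples (nonZeroDivisors R)
    a.support (fun e => coeff e a)
  refine ⟨b, nonZeroDivisors.ne_zero b.2, ?_⟩
  set r : (σ →₀ ℕ) → R := fun e =>
    if h : e ∈ a.support then (hb e h).choose else 0 with hrdef
  refine ⟨∑ e ∈ a.support, monomial e (r e), ?_⟩
  apply MvPolynomial.ext; intro e
  rw [coeff_map, coeff_C_mul, coeff_sum]
  simp only [coeff_monomial]
  rw [Finset.sum_ite_eq' a.support e r]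
  split
  · rename_i h
    rw [hrdef]
    simp only [h, dif_pos]
    rw [(hb e h).choose_spec, Algebra.smul_def]
  · rename_i h
    rw [notMem_support_iff.mp h, mul_zero, map_zero]

/-- Ideal membership over the fraction field can be promoted to the base ring
after multiplying by a suitable nonzero denominator. -/
theorem MvPolynomial.clear_denoms {R K : Type*} [CommRing R] [IsDomain R] [Field K] [Algebra R K]
    [IsFractionRing R K] {σ : Type*} (S : Set (MvPolynomial σ R)) (f : MvPolynomial σ R)
    (hf : MvPolynomial.map (algebraMap R K) f ∈
      Ideal.span (MvPolynomial.map (algebraMap R K) '' S)) :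
    ∃ D : R, D ≠ 0 ∧ C D * f ∈ Ideal.span S := by
  classical
  rw [Ideal.span] at hf
  obtain ⟨c, hsupp, hsum⟩ := Submodule.mem_span_set.mp hf
  choose d hd a' ha' using fun g' : MvPolynomial σ K => MvPolynomial.exists_den (R := R) g'
  have hpre : ∀ g' ∈ c.support, ∃ g ∈ S, MvPolynomial.map (algebraMap R K) g = g' :=
    fun g' hg' => hsupp hg'
  choose! s hsS hs using hpre
  refine ⟨∏ g' ∈ c.support, d (c g'), Finset.prod_ne_zero_iff.mpr fun g' _ => hd (c g'), ?_⟩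
  have key : C (∏ g' ∈ c.support, d (c g')) * f =
      ∑ g' ∈ c.support, (C (∏ x ∈ c.support.erase g', d (c x)) * a' (c g')) * s g' := by
    apply MvPolynomial.map_injective (algebraMap R K) (IsFractionRing.injective R K)
    rw [map_mul, map_sum, map_C]
    calc C (algebraMap R K (∏ g' ∈ c.support, d (c g'))) * MvPolynomial.map (algebraMap R K) f
        = C (algebraMap R K (∏ g' ∈ c.support, d (c g'))) *
            ∑ g' ∈ c.support, c g' * g' := by
          rw [← hsum, Finsupp.sum]
          simp [smul_eq_mul]
      _ = ∑ g' ∈ c.support, C (algebraMap R K (∏ x ∈ c.support, d (c x))) * (c g' * g') := by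
          rw [Finset.mul_sum]
      _ = _ := by
          apply Finset.sum_congr rfl
          intro g' hg'
          rw [map_mul, map_mul, map_C, ha' (c g'), hs g' hg']
          rw [← Finset.mul_prod_erase _ _ hg', map_mul, C_mul]
          ring
  rw [key]
  apply Ideal.sum_mem
  intro g' hg'
  exact Ideal.mul_mem_left _ _ (Ideal.subset_span (hsS g' hg'))

set_option maxHeartbeats 2000000 in
/-- **Dwork-regularity is preserved by reduction at all but finitely many primes**
(Lemma 5.2 of the paper): if `H ∈ 𝔽_q[T][X_0,…,X_n]` is homogeneous of degree `m ≥ 2`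
in the `X`'s and Dwork-regular over `𝔽_q(T)`, then there is a finite set `P` of monic
irreducible polynomials of `𝔽_q[T]` such that for every monic irreducible `π ∉ P`,
the reduction `H mod π` still has degree `m` and is Dwork-regular over the residue
field `k_π = 𝔽_q[T]/(π)`. -/
theorem statement6 (Fq : Type) [Field Fq] [Fintype Fq]
    (hq : Odd (Fintype.card Fq))
    (n : ℕ) (hn : 2 ≤ n) (m : ℕ) (hm : 2 ≤ m)
    (H : MvPolynomial (Fin (n + 1)) (Polynomial Fq))
    (hhom : H.IsHomogeneous m)
    (hDR : DworkRegular (MvPolynomial.map (algebraMap (Polynomial Fq) (RatFunc Fq)) H)) :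
    ∃ P : Finset (Polynomial Fq),
      ∀ π : Polynomial Fq, π.Monic → ∀ hirr : Irreducible π, π ∉ P →
        haveI : (Ideal.span {π}).IsMaximal :=
          PrincipalIdealRing.isMaximal_of_irreducible hirr
        letI : Field (Polynomial Fq ⧸ Ideal.span {π}) := Ideal.Quotient.field _
        ((MvPolynomial.map (Ideal.Quotient.mk (Ideal.span {π})) H).totalDegree = m ∧
          DworkRegular (MvPolynomial.map (Ideal.Quotient.mk (Ideal.span {π})) H)) := by
  classical
  set K := RatFunc Fq
  set F := AlgebraicClosure K
  set ιRK : Polynomial Fq →+* K := algebraMap (Polynomial Fq) K with hιRK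
  set S : Set (MvPolynomial (Fin (n + 1)) (Polynomial Fq)) :=
    insert H (Set.range fun i => X i * pderiv i H) with hSdef
  -- H is nonzero
  have hHne : H ≠ 0 := by
    intro h0
    apply hDR
    refine ⟨fun _ => 1, ?_, ?_, ?_⟩
    · intro hfun
      have := congrFun hfun 0
      simp at this
    · rw [h0]; simp
    · intro i; rw [h0]; simp
  obtain ⟨e0, he0⟩ := MvPolynomial.ne_zero_iff.mp hHne
  -- the Nullstellensatz argument over the algebraic closure of K, plus descent and
  -- clearing of denominators
  have main : ∀ i : Fin (n + 1), ∃ N : ℕ, ∃ D : Polynomial Fq, D ≠ 0 ∧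
      C D * (X i : MvPolynomial (Fin (n + 1)) (Polynomial Fq)) ^ N ∈ Ideal.span S := by
    intro i
    set SK := MvPolynomial.map ιRK '' S with hSK
    have hX : (X i : MvPolynomial (Fin (n + 1)) F) ∈
        (Ideal.span (MvPolynomial.map (algebraMap K F) '' SK)).radical := by
      rw [← MvPolynomial.vanishingIdeal_zeroLocus_eq_radical (K := F)]
      rw [mem_vanishingIdeal_iff]
      intro x hx
      have hx0 : x = 0 := by
        by_contra hxne
        apply hDR
        refine ⟨x, hxne, ?_, ?_⟩
        · have hmem : MvPolynomial.map (algebraMap K F) (MvPolynomial.map ιRK H) ∈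
              Ideal.span (MvPolynomial.map (algebraMap K F) '' SK) :=
            Ideal.subset_span ⟨_, ⟨H, Set.mem_insert _ _, rfl⟩, rfl⟩
          have := (mem_zeroLocus_iff.mp hx) _ hmem
          rwa [aeval_def, Algebra.algebraMap_self, eval₂_map, RingHom.id_comp, ← aeval_def] at this
        · intro j
          have hmem : MvPolynomial.map (algebraMap K F)
              (MvPolynomial.map ιRK (X j * pderiv j H)) ∈
              Ideal.span (MvPolynomial.map (algebraMap K F) '' SK) :=
            Ideal.subset_span ⟨_, ⟨X j * pderiv j H,
              Set.mem_insert_of_mem _ ⟨j, rfl⟩, rfl⟩, rfl⟩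
          have h0 := (mem_zeroLocus_iff.mp hx) _ hmem
          rw [aeval_def, Algebra.algebraMap_self, eval₂_map, RingHom.id_comp, ← aeval_def] at h0
          rw [map_mul, map_mul] at h0
          rw [MvPolynomial.map_X, aeval_X] at h0
          rw [MvPolynomial.pderiv_map]
          exact h0
      rw [hx0]
      simp
    rw [Ideal.mem_radical_iff] at hX
    obtain ⟨N, hN⟩ := hX
    have hKmem : MvPolynomial.map ιRK
        ((X i : MvPolynomial (Fin (n + 1)) (Polynomial Fq)) ^ N) ∈
        Ideal.span (MvPolynomial.map ιRK '' S) := by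
      rw [map_pow, MvPolynomial.map_X]
      apply MvPolynomial.descent_span (F := F)
      rwa [map_pow, MvPolynomial.map_X]
    obtain ⟨D, hD, hmem⟩ := MvPolynomial.clear_denoms S _ hKmem
    exact ⟨N, D, hD, hmem⟩
  choose N D hD hmem using main
  have hDall : (coeff e0 H) * ∏ i, D i ≠ 0 :=
    mul_ne_zero he0 (Finset.prod_ne_zero_iff.mpr fun i _ => hD i)
  refine ⟨(UniqueFactorizationMonoid.normalizedFactors
    ((coeff e0 H) * ∏ i, D i)).toFinset, ?_⟩
  intro π hmonic hirr hπP
  have hπnd : ¬ π ∣ (coeff e0 H) * ∏ i, D i := by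
    intro hdvd
    obtain ⟨q, hq, hassoc⟩ :=
      UniqueFactorizationMonoid.exists_mem_normalizedFactors_of_dvd hDall hirr hdvd
    have hqn := UniqueFactorizationMonoid.normalize_normalized_factor _ hq
    have hpq : π = q := by
      rw [← hmonic.normalize_eq_self, ← hqn]
      exact normalize_eq_normalize hassoc.dvd hassoc.symm.dvd
    exact hπP (Multiset.mem_toFinset.mpr (hpq ▸ hq))
  have hπc0 : ¬ π ∣ coeff e0 H := fun h => hπnd (h.mul_right _)
  have hπD : ∀ i, ¬ π ∣ D i := fun i h =>
    hπnd (Dvd.dvd.mul_left (h.trans (Finset.dvd_prod_of_mem D (Finset.mem_univ i))) _)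
  haveI hmax : (Ideal.span {π}).IsMaximal := PrincipalIdealRing.isMaximal_of_irreducible hirr
  letI : Field (Polynomial Fq ⧸ Ideal.span {π}) := Ideal.Quotient.field _
  set mk : Polynomial Fq →+* Polynomial Fq ⧸ Ideal.span {π} :=
    Ideal.Quotient.mk (Ideal.span {π}) with hmkdef
  have hmkne : ∀ a : Polynomial Fq, ¬ π ∣ a → mk a ≠ 0 := by
    intro a ha h0
    exact ha (Ideal.mem_span_singleton.mp (Ideal.Quotient.eq_zero_iff_mem.mp h0))
  refine ⟨?_, ?_⟩
  · refine (hhom.map mk).totalDegree ?_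
    intro h0
    apply hmkne _ hπc0
    have := congrArg (coeff e0) h0
    rwa [coeff_map, coeff_zero] at this
  · rintro ⟨x, hxne, hxH, hxd⟩
    obtain ⟨i, hxi⟩ : ∃ i, x i ≠ 0 := Function.ne_iff.mp hxne
    set ψ : Polynomial Fq →+* AlgebraicClosure (Polynomial Fq ⧸ Ideal.span {π}) :=
      (algebraMap (Polynomial Fq ⧸ Ideal.span {π})
        (AlgebraicClosure (Polynomial Fq ⧸ Ideal.span {π}))).comp mk with hψ
    set Φ : MvPolynomial (Fin (n + 1)) (Polynomial Fq) →+*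
        AlgebraicClosure (Polynomial Fq ⧸ Ideal.span {π}) :=
      eval₂Hom ψ x with hΦ
    have hΦS : ∀ g ∈ S, Φ g = 0 := by
      intro g hg
      rcases hg with rfl | ⟨j, rfl⟩
      · rw [← hxH, aeval_def, eval₂_map, hΦ]
        simp [hψ]
      · have h0 := hxd j
        rw [MvPolynomial.pderiv_map, aeval_def, eval₂_map] at h0
        rw [hΦ]
        simp only [coe_eval₂Hom, eval₂_mul, eval₂_X]
        rw [← hψ] at h0
        exact h0
    have hker : Ideal.span S ≤ RingHom.ker Φ :=
      Ideal.span_le.mpr fun g hg => hΦS g hg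
    have h0 : Φ (C (D i) * (X i) ^ (N i)) = 0 := hker (hmem i)
    rw [map_mul, map_pow, hΦ] at h0
    simp only [coe_eval₂Hom, eval₂_C, eval₂_X] at h0
    have hψD : ψ (D i) ≠ 0 := by
      rw [hψ, RingHom.comp_apply]
      intro hz
      exact hmkne _ (hπD i) ((algebraMap (Polynomial Fq ⧸ Ideal.span {π})
        (AlgebraicClosure (Polynomial Fq ⧸ Ideal.span {π}))).injective
        (by rw [hz, map_zero]))
    have hxpow : x i ^ (N i) = 0 := by
      rcases mul_eq_zero.mp h0 with h | h
      · exact absurd h hψD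
      · exact h
    rcases Nat.eq_zero_or_pos (N i) with hN0 | hN0
    · rw [hN0, pow_zero] at hxpow
      exact one_ne_zero hxpow
    · exact hxi (pow_eq_zero_iff hN0.ne' |>.mp hxpow)
end

section
/- Let q be an odd prime power with char 𝔽_q = p, let n ≥ 1 be an integer, let u ∈ 𝔽_q[T], let a = (a_0,…,a_n) ∈ 𝔽_q[T]^{n+1}, and let b be an integer with 0 < b < deg_T(u). Then the number of tuples x = (x_0,…,x_n) ∈ 𝔽_q[T]^{n+1} with deg_T(x_i) < b for all i and x_i ≡ a_i (mod u) for all i equals q^{(n+1)(b − deg_T(u))} · Σ over x ∈ 𝔽_q[T]^{n+1} with deg_T(x_i) < deg_T(u) − b for all i of ψ_∞( −(x·a)/u ), where x·a = Σ_{i=0}^{n} x_i a_i and the equality is an identity of complex numbers. -/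
/-- The additive character `ψ_∞` of `K_∞ = 𝔽_q((1/T))`, evaluated at the rational
function `g/u` (with `g, u ∈ 𝔽_q[T]`, `u ≠ 0`):
`ψ_∞(Σ_{j ≤ N} a_j T^j) = exp(2πi·Tr_{𝔽_q/𝔽_p}(a_{−1})/p)`.
The coefficient of `T^{−1}` in the Laurent expansion of `g/u` at infinity equals
`(g mod u).coeff (deg u − 1) / leadingCoeff u`, which gives the closed formula used
here. -/
noncomputable def psiInf (Fq : Type*) [Field Fq] [Fintype Fq] (g u : Polynomial Fq) : ℂ :=
  letI : Algebra (ZMod (ringChar Fq)) Fq := ZMod.algebra Fq (ringChar Fq)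
  Complex.exp (2 * Real.pi * Complex.I *
    ((ZMod.val (Algebra.trace (ZMod (ringChar Fq)) Fq
        ((g % u).coeff (u.natDegree - 1) / u.leadingCoeff)) : ℂ) / (ringChar Fq : ℂ)))

open Polynomial in
/-- The linear functional `g ↦ (g mod u).coeff (deg u - 1) / lc u`. -/
noncomputable def ellS9 {Fq : Type} [Field Fq] [Fintype Fq] (u : Polynomial Fq) :
    Polynomial Fq →ₗ[Fq] Fq where
  toFun g := (g % u).coeff (u.natDegree - 1) / u.leadingCoeff
  map_add' g h := by
    simp only [Polynomial.mod_def, Polynomial.add_modByMonic, Polynomial.coeff_add,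
      div_eq_mul_inv, add_mul]
  map_smul' c g := by
    simp only [Polynomial.mod_def, Polynomial.smul_modByMonic, Polynomial.coeff_smul,
      smul_eq_mul, div_eq_mul_inv, RingHom.id_apply, mul_assoc]

/-- The additive character `x ↦ exp(2πi·Tr(x)/p)` of `𝔽_q`. -/
noncomputable def chiS9 (Fq : Type) [Field Fq] [Fintype Fq] : AddChar Fq ℂ :=
  letI : Algebra (ZMod (ringChar Fq)) Fq := ZMod.algebra Fq (ringChar Fq)
  haveI : NeZero (ringChar Fq) := ⟨(CharP.char_is_prime Fq (ringChar Fq)).ne_zero⟩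
  (ZMod.stdAddChar).compAddMonoidHom (Algebra.trace (ZMod (ringChar Fq)) Fq).toAddMonoidHom

lemma psiInf_eq_chiS9 {Fq : Type} [Field Fq] [Fintype Fq] (u g : Polynomial Fq) :
    psiInf Fq g u = chiS9 Fq (ellS9 u g) := by
  letI : Algebra (ZMod (ringChar Fq)) Fq := ZMod.algebra Fq (ringChar Fq)
  haveI : NeZero (ringChar Fq) := ⟨(CharP.char_is_prime Fq (ringChar Fq)).ne_zero⟩
  simp only [psiInf, chiS9, ellS9, AddChar.compAddMonoidHom_apply,
    LinearMap.toAddMonoidHom_coe, LinearMap.coe_mk, AddHom.coe_mk,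
    ZMod.stdAddChar_apply, ZMod.toCircle_apply]
  congr 1
  ring

lemma exists_chiS9_ne_one (Fq : Type) [Field Fq] [Fintype Fq] :
    ∃ c : Fq, chiS9 Fq c ≠ 1 := by
  letI : Algebra (ZMod (ringChar Fq)) Fq := ZMod.algebra Fq (ringChar Fq)
  haveI hp : Fact (ringChar Fq).Prime := ⟨CharP.char_is_prime Fq (ringChar Fq)⟩
  haveI : NeZero (ringChar Fq) := ⟨hp.out.ne_zero⟩
  haveI : Module.Finite (ZMod (ringChar Fq)) Fq := Module.Finite.of_finite
  haveI : Algebra.IsAlgebraic (ZMod (ringChar Fq)) Fq :=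
    Algebra.IsAlgebraic.of_finite _ _
  obtain ⟨c, hc⟩ := Algebra.trace_surjective (ZMod (ringChar Fq)) Fq 1
  refine ⟨c, ?_⟩
  simp only [chiS9, AddChar.compAddMonoidHom_apply, LinearMap.toAddMonoidHom_coe, hc]
  intro h
  have h0 : (ZMod.stdAddChar (N := ringChar Fq)) (0 : ZMod (ringChar Fq)) = 1 :=
    AddChar.map_zero_eq_one _
  have := ZMod.injective_stdAddChar (h.trans h0.symm)
  exact one_ne_zero this

lemma AddChar.map_finsetSum {ι A M : Type*} [AddCommMonoid A] [CommMonoid M]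
    (ψ : AddChar A M) (s : Finset ι) (f : ι → A) :
    ψ (∑ i ∈ s, f i) = ∏ i ∈ s, ψ (f i) := by
  classical
  induction s using Finset.cons_induction with
  | empty => simp
  | cons i s hi ih => rw [Finset.sum_cons, Finset.prod_cons, AddChar.map_add_eq_mul, ih]

/-- **Detecting congruences with the additive character `ψ_∞`** (Lemma 6.5 of the
paper): for `u ∈ 𝔽_q[T]`, `a ∈ 𝔽_q[T]^{n+1}` and `0 < b < deg_T u`,
`#{x : deg_T x_i < b ∀i, x ≡ a (mod u)}
  = q^{(n+1)(b − deg u)} Σ_{deg_T x_i < deg u − b} ψ_∞(−(x·a)/u)`. -/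
theorem statement9 (Fq : Type) [Field Fq] [Fintype Fq]
    (hq : Odd (Fintype.card Fq)) (n : ℕ) (hn : 1 ≤ n)
    (u : Polynomial Fq) (a : Fin (n + 1) → Polynomial Fq)
    (b : ℕ) (hb : 0 < b) (hbu : b < u.natDegree) :
    (Nat.card {x : Fin (n + 1) → Polynomial Fq //
        (∀ i, (x i).degree < (b : WithBot ℕ)) ∧ ∀ i, u ∣ (x i - a i)} : ℂ)
      = (Fintype.card Fq : ℂ) ^ (((n : ℤ) + 1) * ((b : ℤ) - (u.natDegree : ℤ)))
        * ∑ᶠ x : {x : Fin (n + 1) → Polynomial Fq //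
            ∀ i, (x i).degree < ((u.natDegree - b : ℕ) : WithBot ℕ)},
            psiInf Fq (-(∑ i, x.1 i * a i)) u := by
  classical
  -- Setup
  have hu : u ≠ 0 := by
    intro h; rw [h, Polynomial.natDegree_zero] at hbu; omega
  set d := u.natDegree with hd
  set m := d - b with hm
  have hm1 : 1 ≤ m := by omega
  have hlc : u.leadingCoeff ≠ 0 := Polynomial.leadingCoeff_ne_zero.2 hu
  set v := u * Polynomial.C u.leadingCoeff⁻¹ with hv
  have hvm : v.Monic := Polynomial.monic_mul_leadingCoeff_inv hu
  have hudeg : u.degree = (d : WithBot ℕ) := Polynomial.degree_eq_natDegree hu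
  have hdegv : v.degree = (d : WithBot ℕ) := by
    rw [hv, Polynomial.degree_mul_leadingCoeff_inv u hu, hudeg]
  -- u and v generate the same ideal
  have hunit : IsUnit (Polynomial.C u.leadingCoeff⁻¹) :=
    Polynomial.isUnit_C.2 (IsUnit.inv (Ne.isUnit hlc))
  have hdvd_iff : ∀ w : Polynomial Fq, u ∣ w ↔ v ∣ w := fun w =>
    (Associated.dvd_iff_dvd_left ⟨hunit.unit, by rw [IsUnit.unit_spec]⟩)
  have hself : ∀ w : Polynomial Fq, w.degree < (d : WithBot ℕ) → w %ₘ v = w := by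
    intro w hw
    exact (Polynomial.modByMonic_eq_self_iff hvm).2 (by rw [hdegv]; exact hw)
  set r : Fin (n + 1) → Polynomial Fq := fun i => a i %ₘ v with hr
  have hri : ∀ i, r i = a i %ₘ v := fun i => by rw [hr]
  have hrdeg : ∀ i, (r i).degree < (d : WithBot ℕ) := by
    intro i
    have := Polynomial.degree_modByMonic_lt (a i) hvm
    rwa [hdegv] at this
  have hudvdsub : ∀ i, u ∣ (r i - a i) := by
    intro i
    refine (hdvd_iff _).2 ⟨-(a i /ₘ v), ?_⟩
    have h := Polynomial.modByMonic_add_div (a i) v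
    rw [hri i]
    linear_combination h
  -- the key congruence for products
  have hcong : ∀ y c : Polynomial Fq, (y * (c %ₘ v)).degree < (d : WithBot ℕ) →
      (y * c) %ₘ v = y * (c %ₘ v) := by
    intro y c hdeg
    have h1 : c - c %ₘ v = v * (c /ₘ v) := by
      linear_combination -(Polynomial.modByMonic_add_div c v)
    have h2 : v ∣ (y * c - y * (c %ₘ v)) := by
      refine ⟨y * (c /ₘ v), ?_⟩
      rw [← mul_sub, h1]; ring
    have h3 := (Polynomial.modByMonic_eq_zero_iff_dvd hvm).2 h2
    rw [Polynomial.sub_modByMonic] at h3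
    rw [sub_eq_zero.1 h3, hself _ hdeg]
  -- mod u is mod v
  have hmodv : ∀ g : Polynomial Fq, g % u = g %ₘ v := fun g => Polynomial.mod_def
  -- the left hand side
  have hLHS : (Nat.card {x : Fin (n + 1) → Polynomial Fq //
        (∀ i, (x i).degree < (b : WithBot ℕ)) ∧ ∀ i, u ∣ (x i - a i)} : ℂ)
      = if ∀ i, (r i).degree < (b : WithBot ℕ) then 1 else 0 := by
    split_ifs with hC
    · haveI : Unique {x : Fin (n + 1) → Polynomial Fq //
          (∀ i, (x i).degree < (b : WithBot ℕ)) ∧ ∀ i, u ∣ (x i - a i)} := by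
        refine ⟨⟨⟨fun i => r i, hC, fun i => hudvdsub i⟩⟩, ?_⟩
        rintro ⟨x, hx1, hx2⟩
        refine Subtype.ext (funext fun i => ?_)
        have hw : u ∣ (x i - r i) := by
          have := dvd_sub (hx2 i) (hudvdsub i)
          simpa using this
        have hdeg : (x i - r i).degree < u.degree := by
          rw [hudeg]
          refine lt_of_le_of_lt (Polynomial.degree_sub_le _ _) ?_
          refine lt_of_lt_of_le (max_lt (hx1 i) (hC i)) ?_
          exact_mod_cast WithBot.coe_le_coe.2 hbu.le
        have := Polynomial.eq_zero_of_dvd_of_degree_lt hw hdeg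
        exact sub_eq_zero.1 this
      rw [Nat.card_unique]; norm_num
    · haveI : IsEmpty {x : Fin (n + 1) → Polynomial Fq //
          (∀ i, (x i).degree < (b : WithBot ℕ)) ∧ ∀ i, u ∣ (x i - a i)} := by
        push_neg at hC
        obtain ⟨i0, hi0⟩ := hC
        refine ⟨fun x => ?_⟩
        obtain ⟨x, hx1, hx2⟩ := x
        have hxb : (x i0).degree < (d : WithBot ℕ) := by
          refine lt_trans (hx1 i0) ?_
          exact_mod_cast WithBot.coe_lt_coe.2 hbu
        have h1 : x i0 %ₘ v = r i0 := by
          have h2 : (x i0 - a i0) %ₘ v = 0 :=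
            (Polynomial.modByMonic_eq_zero_iff_dvd hvm).2 ((hdvd_iff _).1 (hx2 i0))
          rw [Polynomial.sub_modByMonic] at h2
          simp only [hr]
          exact sub_eq_zero.1 h2
        rw [hself _ hxb] at h1
        have hlt : (r i0).degree < (b : WithBot ℕ) := by rw [← h1]; exact hx1 i0
        exact absurd hlt (not_lt.2 hi0)
      rw [Nat.card_of_isEmpty]; norm_num
  -- ambient space for the sum
  haveI fV : Fintype (Polynomial.degreeLT Fq m) :=
    Fintype.ofEquiv _ (Polynomial.degreeLTEquiv Fq m).toEquiv.symm
  have cardV : (Fintype.card (Polynomial.degreeLT Fq m) : ℂ) = (Fintype.card Fq : ℂ) ^ m := by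
    rw [Fintype.card_congr (Polynomial.degreeLTEquiv Fq m).toEquiv]
    simp [Fintype.card_fun]
  -- the subtype in the sum
  let S := {x : Fin (n + 1) → Polynomial Fq //
      ∀ i, (x i).degree < ((m : ℕ) : WithBot ℕ)}
  let eS : S ≃ (Fin (n + 1) → Polynomial.degreeLT Fq m) :=
    { toFun := fun x i => ⟨x.1 i, Polynomial.mem_degreeLT.2 (x.2 i)⟩
      invFun := fun f => ⟨fun i => f i, fun i => Polynomial.mem_degreeLT.1 (f i).2⟩
      left_inv := fun x => rfl
      right_inv := fun f => rfl }
  haveI : Fintype S := Fintype.ofEquiv _ eS.symm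
  -- the characters
  let lmap : Fin (n + 1) → (Polynomial.degreeLT Fq m →ₗ[Fq] Fq) := fun i =>
    -((ellS9 u).comp ((LinearMap.mulRight Fq (a i)).comp (Polynomial.degreeLT Fq m).subtype))
  let φ : Fin (n + 1) → AddChar (Polynomial.degreeLT Fq m) ℂ := fun i =>
    (chiS9 Fq).compAddMonoidHom (lmap i).toAddMonoidHom
  have hφ : ∀ i (y : Polynomial.degreeLT Fq m),
      φ i y = chiS9 Fq (-(ellS9 u ((y : Polynomial Fq) * a i))) := by
    intro i y
    simp only [φ, lmap, AddChar.compAddMonoidHom_apply, LinearMap.toAddMonoidHom_coe,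
      LinearMap.neg_apply, LinearMap.comp_apply, LinearMap.mulRight_apply,
      Submodule.coe_subtype, map_neg]
  -- splitting of psiInf along the sum
  have hsplit : ∀ z : Fin (n + 1) → Polynomial.degreeLT Fq m,
      psiInf Fq (-(∑ i, (z i : Polynomial Fq) * a i)) u = ∏ i, φ i (z i) := by
    intro z
    rw [psiInf_eq_chiS9]
    have h1 : ellS9 u (-(∑ i, (z i : Polynomial Fq) * a i))
        = ∑ i, -(ellS9 u ((z i : Polynomial Fq) * a i)) := by
      rw [map_neg, map_sum, ← Finset.sum_neg_distrib]
    rw [h1, AddChar.map_finsetSum]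
    exact Finset.prod_congr rfl fun i _ => (hφ i (z i)).symm
  -- the value of ellS9 on products
  have hell : ∀ g : Polynomial Fq,
      ellS9 u g = (g %ₘ v).coeff (d - 1) / u.leadingCoeff := by
    intro g
    simp only [ellS9, LinearMap.coe_mk, AddHom.coe_mk, hmodv]
    rfl
  -- inner sums
  have hφsum : ∀ i, (∑ y : Polynomial.degreeLT Fq m, φ i y)
      = if (r i).degree < (b : WithBot ℕ) then (Fintype.card Fq : ℂ) ^ m else 0 := by
    intro i
    split_ifs with hC
    · have hone : φ i = 1 := by
        ext y
        rw [hφ]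
        have hy : ((y : Polynomial Fq)).degree < ((m : ℕ) : WithBot ℕ) :=
          Polynomial.mem_degreeLT.1 y.2
        have hcoeff : (((y : Polynomial Fq) * a i) %ₘ v).coeff (d - 1) = 0 := by
          by_cases hy0 : (y : Polynomial Fq) = 0
          · simp [hy0, Polynomial.zero_modByMonic]
          by_cases hr0 : r i = 0
          · have hr0' : a i %ₘ v = 0 := by rw [← hri i]; exact hr0
            have hdz : ((y : Polynomial Fq) * (a i %ₘ v)).degree < (d : WithBot ℕ) := by
              rw [hr0', mul_zero, Polynomial.degree_zero]
              exact WithBot.bot_lt_coe d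
            have : ((y : Polynomial Fq) * a i) %ₘ v = 0 := by
              rw [hcong _ _ hdz, hr0', mul_zero]
            simp [this]
          · have hny : (y : Polynomial Fq).natDegree < m :=
              (Polynomial.natDegree_lt_iff_degree_lt hy0).2 hy
            have hnr : (r i).natDegree < b :=
              (Polynomial.natDegree_lt_iff_degree_lt hr0).2 hC
            have hmul0 : (y : Polynomial Fq) * r i ≠ 0 := mul_ne_zero hy0 hr0
            have hnmul : ((y : Polynomial Fq) * r i).natDegree < d - 1 := by
              rw [Polynomial.natDegree_mul hy0 hr0]; omega
            have hdmul : ((y : Polynomial Fq) * r i).degree < (d : WithBot ℕ) := by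
              rw [Polynomial.degree_eq_natDegree hmul0]
              exact_mod_cast WithBot.coe_lt_coe.2 (by omega)
            rw [hri i] at hdmul hnmul
            rw [hcong _ _ hdmul]
            exact Polynomial.coeff_eq_zero_of_natDegree_lt hnmul
        rw [hell, hcoeff, zero_div, neg_zero, AddChar.map_zero_eq_one, AddChar.one_apply]
      rw [AddChar.sum_eq_card_of_eq_one hone, cardV]
    · -- nontrivial character: the sum vanishes
      have hr0 : r i ≠ 0 := by
        intro h
        apply hC
        rw [h, Polynomial.degree_zero]
        exact WithBot.bot_lt_coe b
      set k := (r i).natDegree with hk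
      have hbk : b ≤ k := by
        have : (b : WithBot ℕ) ≤ (r i).degree := not_lt.1 hC
        rw [Polynomial.degree_eq_natDegree hr0] at this
        exact_mod_cast this
      have hkd : k < d := by
        have := hrdeg i
        rw [Polynomial.degree_eq_natDegree hr0] at this
        exact_mod_cast this
      -- the witness polynomial
      obtain ⟨j, hj⟩ : ∃ j, d - 1 = k + j ∧ j < m := ⟨d - 1 - k, by omega, by omega⟩
      set y0 : Polynomial Fq := Polynomial.X ^ j with hy0def
      have hy00 : y0 ≠ 0 := pow_ne_zero _ Polynomial.X_ne_zero
      have hy0r : (y0 * r i).natDegree = d - 1 := by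
        rw [Polynomial.natDegree_mul hy00 hr0, hy0def, Polynomial.natDegree_X_pow]
        omega
      have hy0rne : y0 * r i ≠ 0 := mul_ne_zero hy00 hr0
      have hy0rdeg : (y0 * r i).degree < (d : WithBot ℕ) := by
        rw [Polynomial.degree_eq_natDegree hy0rne, hy0r]
        exact_mod_cast WithBot.coe_lt_coe.2 (by omega)
      have hy0rdeg' : (y0 * (a i %ₘ v)).degree < (d : WithBot ℕ) := by
        rw [← hri i]; exact hy0rdeg
      have hmod : (y0 * a i) %ₘ v = y0 * r i := by
        rw [hcong _ _ hy0rdeg', ← hri i]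
      have hcoeffk : (y0 * r i).coeff (d - 1) = (r i).leadingCoeff := by
        rw [hy0def, hj.1, Polynomial.coeff_X_pow_mul]
        rfl
      have hellval : ellS9 u (y0 * a i) = (r i).leadingCoeff / u.leadingCoeff := by
        rw [hell, hmod, hcoeffk]
      have he0 : -(ellS9 u (y0 * a i)) ≠ 0 := by
        rw [hellval]
        simp only [ne_eq, neg_eq_zero, div_eq_zero_iff, not_or]
        exact ⟨Polynomial.leadingCoeff_ne_zero.2 hr0, fun h => hlc h⟩
      obtain ⟨c1, hc1⟩ := exists_chiS9_ne_one Fq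
      -- scaled witness in degreeLT
      have hy0m : ((c1 * (-(ellS9 u (y0 * a i)))⁻¹) • y0) ∈ Polynomial.degreeLT Fq m := by
        rw [Polynomial.mem_degreeLT]
        refine lt_of_le_of_lt (Polynomial.degree_smul_le _ _) ?_
        rw [hy0def, Polynomial.degree_X_pow]
        exact_mod_cast WithBot.coe_lt_coe.2 hj.2
      have hne : φ i ≠ 1 := by
        rw [AddChar.ne_one_iff]
        refine ⟨⟨(c1 * (-(ellS9 u (y0 * a i)))⁻¹) • y0, hy0m⟩, ?_⟩
        rw [hφ]
        have : -(ellS9 u (((c1 * (-(ellS9 u (y0 * a i)))⁻¹) • y0) * a i)) = c1 := by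
          rw [smul_mul_assoc, map_smul, smul_eq_mul]
          have he0' : (ellS9 u) (y0 * a i) ≠ 0 := fun h => he0 (by rw [h, neg_zero])
          field_simp
        rw [this]
        exact hc1
      rw [AddChar.sum_eq_zero_of_ne_one hne]
  -- assembling the right-hand side
  haveI : Fintype {x : Fin (n + 1) → Polynomial Fq //
      ∀ i, (x i).degree < ((m : ℕ) : WithBot ℕ)} := (inferInstance : Fintype S)
  rw [finsum_eq_sum_of_fintype]
  have hsum : (∑ x : S, psiInf Fq (-(∑ i, x.1 i * a i)) u)
      = ∏ i, (∑ y : Polynomial.degreeLT Fq m, φ i y) := by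
    rw [← Equiv.sum_comp eS.symm (fun x : S => psiInf Fq (-(∑ i, x.1 i * a i)) u)]
    rw [Fintype.prod_sum]
    exact Finset.sum_congr rfl fun z _ => hsplit z
  rw [hLHS]
  calc (if ∀ i, (r i).degree < (b : WithBot ℕ) then (1 : ℂ) else 0)
      = (Fintype.card Fq : ℂ) ^ (((n : ℤ) + 1) * ((b : ℤ) - (d : ℤ)))
        * ∏ i, (∑ y : Polynomial.degreeLT Fq m, φ i y) := by
        have hq0 : (Fintype.card Fq : ℂ) ≠ 0 :=
          Nat.cast_ne_zero.2 Fintype.card_ne_zero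
        split_ifs with hC
        · rw [Finset.prod_congr rfl fun i _ => (hφsum i).trans (if_pos (hC i))]
          rw [Finset.prod_const, Finset.card_univ, Fintype.card_fin]
          rw [← pow_mul, ← zpow_natCast (Fintype.card Fq : ℂ) (m * (n + 1)),
            ← zpow_add₀ hq0]
          have hz : ((n : ℤ) + 1) * ((b : ℤ) - (d : ℤ)) + ((m * (n + 1) : ℕ) : ℤ) = 0 := by
            have hmz : (m : ℤ) = (d : ℤ) - (b : ℤ) := by omega
            push_cast
            rw [hmz]; ring
          rw [hz, zpow_zero]
        · push_neg at hC
          obtain ⟨i0, hi0⟩ := hC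
          rw [Finset.prod_eq_zero (Finset.mem_univ i0)
            ((hφsum i0).trans (if_neg (not_lt.2 hi0)))]
          · ring
    _ = _ := by rw [hsum]
end

section
/- Let q be an odd prime power, n ≥ 1 an integer, let π ≠ π′ be monic irreducible polynomials in 𝔽_q[T], let χ_π and χ_{π′} be non-principal multiplicative characters of moduli π and π′ respectively, let G ∈ 𝔽_q[T][X_0,…,X_n] be any polynomial, and let b be an integer with 0 < b < deg_T(π·π′). Let π̄, π̄′ ∈ 𝔽_q[T] satisfy π·π̄ ≡ 1 (mod π′) and π′·π̄′ ≡ 1 (mod π). Then Σ over x ∈ 𝔽_q[T]^{n+1} with deg_T(x_i) < b for all i of χ_π(G(x))·χ_{π′}(G(x)) equals q^{(n+1)(b − deg_T(ππ′))} · Σ over x ∈ 𝔽_q[T]^{n+1} with deg_T(x_i) < deg_T(ππ′) − b for all i of S_G(π̄′ x, χ_π) · S_G(π̄ x, χ_{π′}). -/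
/-- The complete mixed character sum
`S_G(w, χ_π) = Σ_{a mod π} χ_π(G(a)) ψ_∞(−(w·a)/π)`, the residues mod `π` being
represented by tuples of polynomials of degree `< deg π`. -/
noncomputable def charSum (Fq : Type*) [Field Fq] [Fintype Fq] {n : ℕ}
    (G : MvPolynomial (Fin (n + 1)) (Polynomial Fq)) (π : Polynomial Fq)
    (χ : MulChar (Polynomial Fq ⧸ Ideal.span {π}) ℂ)
    (w : Fin (n + 1) → Polynomial Fq) : ℂ :=
  ∑ᶠ a : {a : Fin (n + 1) → Polynomial Fq // ∀ i, (a i).degree < π.degree},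
    χ (Ideal.Quotient.mk (Ideal.span {π}) (MvPolynomial.eval a.1 G))
      * psiInf Fq (-(∑ i, w i * a.1 i)) π

namespace Stmt10

open Polynomial Finset

variable (Fq : Type) [Field Fq] [Fintype Fq]

/-- Trace to the prime field. -/
noncomputable def trc (c : Fq) : ZMod (ringChar Fq) :=
  letI : Algebra (ZMod (ringChar Fq)) Fq := ZMod.algebra Fq (ringChar Fq)
  Algebra.trace (ZMod (ringChar Fq)) Fq c

/-- The additive character of `Fq`. -/
noncomputable def Efn (c : Fq) : ℂ :=
  Complex.exp (2 * Real.pi * Complex.I *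
    ((ZMod.val (trc Fq c) : ℂ) / (ringChar Fq : ℂ)))

lemma psiInf_def (g u : Polynomial Fq) :
    psiInf Fq g u = Efn Fq ((g % u).coeff (u.natDegree - 1) / u.leadingCoeff) := rfl

lemma ringChar_prime : (ringChar Fq).Prime := CharP.char_is_prime Fq (ringChar Fq)

lemma Efn_eq_stdAddChar (c : Fq) :
    haveI : NeZero (ringChar Fq) := ⟨(ringChar_prime Fq).ne_zero⟩
    Efn Fq c = ZMod.stdAddChar (trc Fq c) := by
  haveI : NeZero (ringChar Fq) := ⟨(ringChar_prime Fq).ne_zero⟩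
  rw [ZMod.stdAddChar_apply, ZMod.toCircle_apply]
  unfold Efn
  ring_nf

lemma trc_add (c c' : Fq) : trc Fq (c + c') = trc Fq c + trc Fq c' := by
  unfold trc
  exact map_add _ _ _

lemma trc_zero : trc Fq 0 = 0 := by
  unfold trc; exact map_zero _

lemma Efn_add (c c' : Fq) : Efn Fq (c + c') = Efn Fq c * Efn Fq c' := by
  haveI : NeZero (ringChar Fq) := ⟨(ringChar_prime Fq).ne_zero⟩
  rw [Efn_eq_stdAddChar, Efn_eq_stdAddChar, Efn_eq_stdAddChar, trc_add,
    AddChar.map_add_eq_mul]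

lemma Efn_zero : Efn Fq 0 = 1 := by
  haveI : NeZero (ringChar Fq) := ⟨(ringChar_prime Fq).ne_zero⟩
  rw [Efn_eq_stdAddChar, trc_zero, AddChar.map_zero_eq_one]

lemma Efn_exists_ne_one : ∃ c : Fq, Efn Fq c ≠ 1 := by
  haveI : NeZero (ringChar Fq) := ⟨(ringChar_prime Fq).ne_zero⟩
  haveI : Fact (ringChar Fq).Prime := ⟨ringChar_prime Fq⟩
  letI : Algebra (ZMod (ringChar Fq)) Fq := ZMod.algebra Fq (ringChar Fq)
  haveI : FiniteDimensional (ZMod (ringChar Fq)) Fq := Module.Finite.of_finite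
  obtain ⟨c, hc⟩ := Algebra.trace_surjective (ZMod (ringChar Fq)) Fq 1
  refine ⟨c, ?_⟩
  have htrc : trc Fq c = 1 := hc
  rw [Efn_eq_stdAddChar, htrc]
  intro h
  have h0 : (ZMod.stdAddChar (1 : ZMod (ringChar Fq)) : ℂ)
      = ZMod.stdAddChar (0 : ZMod (ringChar Fq)) := by
    rw [h, AddChar.map_zero_eq_one]
  have h1 : (1 : ZMod (ringChar Fq)) = 0 := ZMod.injective_stdAddChar h0
  exact one_ne_zero h1


section Spaces

set_option linter.unusedSectionVars false

/-- Polynomials of degree `< N`. -/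
abbrev W (N : ℕ) : Type := {y : Polynomial Fq // y.degree < (N : WithBot ℕ)}

noncomputable def wEquiv (N : ℕ) : W Fq N ≃ (Fin N → Fq) :=
  (Equiv.subtypeEquivRight (fun y => (mem_degreeLT (R := Fq)).symm)).trans
    (degreeLTEquiv Fq N).toEquiv

noncomputable instance (N : ℕ) : Fintype (W Fq N) :=
  Fintype.ofEquiv _ (wEquiv Fq N).symm

lemma card_W (N : ℕ) : Fintype.card (W Fq N) = Fintype.card Fq ^ N := by
  rw [Fintype.card_congr (wEquiv Fq N), Fintype.card_fun, Fintype.card_fin]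

/-- Tuple version of the degree-bounded subtype. -/
noncomputable def tupEquiv (m : ℕ) (c : WithBot ℕ) (N : ℕ)
    (h : ∀ y : Polynomial Fq, y.degree < c ↔ y.degree < (N : WithBot ℕ)) :
    {x : Fin m → Polynomial Fq // ∀ i, (x i).degree < c} ≃ (Fin m → W Fq N) where
  toFun x i := ⟨x.1 i, (h _).1 (x.2 i)⟩
  invFun f := ⟨fun i => (f i).1, fun i => (h _).2 (f i).2⟩
  left_inv x := rfl
  right_inv f := rfl

lemma finsum_tup (m : ℕ) (c : WithBot ℕ) (N : ℕ)
    (h : ∀ y : Polynomial Fq, y.degree < c ↔ y.degree < (N : WithBot ℕ))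
    (f : {x : Fin m → Polynomial Fq // ∀ i, (x i).degree < c} → ℂ) :
    ∑ᶠ x, f x = ∑ z : Fin m → W Fq N, f ((tupEquiv Fq m c N h).symm z) := by
  haveI : Fintype {x : Fin m → Polynomial Fq // ∀ i, (x i).degree < c} :=
    Fintype.ofEquiv _ (tupEquiv Fq m c N h).symm
  rw [finsum_eq_sum_of_fintype]
  exact (Equiv.sum_comp (tupEquiv Fq m c N h).symm f).symm

end Spaces

section PsiInf

set_option linter.unusedSectionVars false

variable {u g h π π' : Polynomial Fq}

lemma mod_eq_modByMonic (hu : u.Monic) (g : Polynomial Fq) : g % u = g %ₘ u := by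
  rw [Polynomial.mod_def, hu.leadingCoeff, inv_one, map_one, mul_one]

lemma psiInf_monic (hu : u.Monic) (g : Polynomial Fq) :
    psiInf Fq g u = Efn Fq ((g %ₘ u).coeff (u.natDegree - 1)) := by
  rw [psiInf_def, mod_eq_modByMonic Fq hu, hu.leadingCoeff, div_one]

lemma psiInf_add (hu : u.Monic) (g h : Polynomial Fq) :
    psiInf Fq (g + h) u = psiInf Fq g u * psiInf Fq h u := by
  rw [psiInf_monic Fq hu, psiInf_monic Fq hu, psiInf_monic Fq hu,
    add_modByMonic, coeff_add, Efn_add]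

lemma psiInf_zero (hu : u.Monic) : psiInf Fq 0 u = 1 := by
  rw [psiInf_monic Fq hu, zero_modByMonic, coeff_zero, Efn_zero]

lemma psiInf_sum (hu : u.Monic) {ι : Type*} (s : Finset ι) (f : ι → Polynomial Fq) :
    psiInf Fq (-(∑ i ∈ s, f i)) u = ∏ i ∈ s, psiInf Fq (-(f i)) u := by
  classical
  induction s using Finset.induction_on with
  | empty => simpa using psiInf_zero Fq hu
  | insert _ _ hx ih =>
      rw [Finset.sum_insert hx, Finset.prod_insert hx, neg_add, psiInf_add Fq hu, ih]

lemma modByMonic_congr (hu : u.Monic) {g h : Polynomial Fq} (hd : u ∣ g - h) :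
    g %ₘ u = h %ₘ u := by
  obtain ⟨t, ht⟩ := hd
  have hg : g = h + u * t := by linear_combination ht
  rw [hg, add_modByMonic, (modByMonic_eq_zero_iff_dvd hu).2 ⟨t, rfl⟩, add_zero]

lemma self_sub_modByMonic (hu : u.Monic) (g : Polynomial Fq) :
    u ∣ g - g %ₘ u := by
  conv_lhs => skip
  have := modByMonic_add_div g u
  exact ⟨g /ₘ u, by linear_combination -this⟩

lemma natDegree_lt_of_degree_lt {r : Polynomial Fq} {N : ℕ} (h0 : r ≠ 0)
    (h : r.degree < (N : WithBot ℕ)) : r.natDegree < N := by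
  rwa [degree_eq_natDegree h0, Nat.cast_lt] at h

/-- degree of a product, with bounds. -/
lemma degree_mul_lt2 {r s : Polynomial Fq} {A B : ℕ} (hA : 0 < A) (hB : 0 < B)
    (hr : r.degree < (A : WithBot ℕ)) (hs : s.degree < (B : WithBot ℕ)) :
    (r * s).degree < ((A + B - 1 : ℕ) : WithBot ℕ) := by
  rcases eq_or_ne r 0 with h0 | h0
  · rw [h0, zero_mul, degree_zero]; exact WithBot.bot_lt_coe _
  rcases eq_or_ne s 0 with h1 | h1
  · rw [h1, mul_zero, degree_zero]; exact WithBot.bot_lt_coe _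
  have hr' := natDegree_lt_of_degree_lt Fq h0 hr
  have hs' := natDegree_lt_of_degree_lt Fq h1 hs
  rw [degree_mul, degree_eq_natDegree h0, degree_eq_natDegree h1, ← Nat.cast_add,
    Nat.cast_lt]
  omega

lemma degree_mul_monic_lt {r : Polynomial Fq} {A : ℕ} (hr : r.degree < (A : WithBot ℕ))
    (hu : u.Monic) :
    (r * u).degree < ((A + u.natDegree : ℕ) : WithBot ℕ) := by
  rcases eq_or_ne r 0 with h0 | h0
  · rw [h0, zero_mul, degree_zero]; exact WithBot.bot_lt_coe _
  rw [degree_mul, degree_eq_natDegree h0, degree_eq_natDegree hu.ne_zero, ← Nat.cast_add,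
    Nat.cast_lt]
  have := natDegree_lt_of_degree_lt Fq h0 hr
  omega

lemma coeff_mul_monic {r : Polynomial Fq} {dr : ℕ} (hdr : 1 ≤ dr)
    (hr : r.degree < (dr : WithBot ℕ)) (hu : u.Monic) :
    (r * u).coeff (dr + u.natDegree - 1) = r.coeff (dr - 1) := by
  rw [coeff_mul]
  rw [Finset.sum_eq_single ((dr - 1, u.natDegree) : ℕ × ℕ)]
  · rw [hu.coeff_natDegree, mul_one]
  · rintro ⟨i, j⟩ hmem hne
    rw [Finset.HasAntidiagonal.mem_antidiagonal] at hmem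
    rcases lt_or_ge i dr with hi | hi
    · have hij : i ≤ dr - 1 := by omega
      rcases eq_or_lt_of_le hij with he | hlt
      · exact absurd (by simp [Prod.ext_iff]; omega) hne
      · have hj : u.natDegree < j := by omega
        exact mul_eq_zero_of_right _ (coeff_eq_zero_of_natDegree_lt hj)
    · have hri : r.coeff i = 0 := by
        apply coeff_eq_zero_of_degree_lt
        exact lt_of_lt_of_le hr (by exact_mod_cast hi)
      simp [hri]
  · intro hmem
    exact absurd (Finset.HasAntidiagonal.mem_antidiagonal.2 (by omega)) hmem

lemma psiInf_split (hπm : π.Monic) (hπ'm : π'.Monic)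
    (h1 : 1 ≤ π.natDegree) (h2 : 1 ≤ π'.natDegree) (g h : Polynomial Fq) :
    psiInf Fq g π * psiInf Fq h π' = psiInf Fq (g * π' + h * π) (π * π') := by
  have hm : (π * π').Monic := hπm.mul hπ'm
  have hd : (π * π').natDegree = π.natDegree + π'.natDegree :=
    natDegree_mul hπm.ne_zero hπ'm.ne_zero
  rw [psiInf_monic Fq hπm, psiInf_monic Fq hπ'm, psiInf_monic Fq hm, ← Efn_add]
  congr 1
  have hgd : (g %ₘ π).degree < (π.natDegree : WithBot ℕ) := by
    have := degree_modByMonic_lt g hπm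
    rwa [degree_eq_natDegree hπm.ne_zero] at this
  have hhd : (h %ₘ π').degree < (π'.natDegree : WithBot ℕ) := by
    have := degree_modByMonic_lt h hπ'm
    rwa [degree_eq_natDegree hπ'm.ne_zero] at this
  have hmod : (g * π' + h * π) %ₘ (π * π') = (g %ₘ π) * π' + (h %ₘ π') * π := by
    have hdvd : (π * π') ∣ (g * π' + h * π) - ((g %ₘ π) * π' + (h %ₘ π') * π) := by
      have e0 : (g * π' + h * π) - ((g %ₘ π) * π' + (h %ₘ π') * π)
          = (g - g %ₘ π) * π' + (h - h %ₘ π') * π := by ring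
      rw [e0]
      refine dvd_add (mul_dvd_mul_right (self_sub_modByMonic Fq hπm g) π') ?_
      rw [mul_comm π π']
      exact mul_dvd_mul_right (self_sub_modByMonic Fq hπ'm h) π
    rw [modByMonic_congr Fq hm hdvd]
    apply (modByMonic_eq_self_iff hm).2
    have hda := degree_mul_monic_lt Fq hgd hπ'm
    have hdb := degree_mul_monic_lt Fq hhd hπm
    rw [degree_eq_natDegree hm.ne_zero, hd]
    refine lt_of_le_of_lt (degree_add_le _ _) (max_lt hda ?_)
    have : π'.natDegree + π.natDegree = π.natDegree + π'.natDegree := by omega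
    rwa [this] at hdb
  rw [hmod, coeff_add, hd]
  have e1 := coeff_mul_monic Fq h1 hgd hπ'm
  have e2 := coeff_mul_monic Fq h2 hhd hπm
  have i2 : π.natDegree + π'.natDegree - 1 = π'.natDegree + π.natDegree - 1 := by omega
  rw [e1, i2, e2]

end PsiInf


section Orth

set_option linter.unusedSectionVars false

variable {u : Polynomial Fq}

lemma orth (hu : u.Monic) {m bb : ℕ} (hm : 0 < m) (hbb : 0 < bb)
    (hmb : m + bb = u.natDegree) (c : Polynomial Fq) :
    ∑ y : W Fq m, psiInf Fq (-(y.1 * c)) u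
      = if (c %ₘ u).degree < (bb : WithBot ℕ) then ((Fintype.card Fq : ℂ)) ^ m else 0 := by
  have hcongr : ∀ y : Polynomial Fq, (-(y * c)) %ₘ u = (-(y * (c %ₘ u))) %ₘ u := by
    intro y
    apply modByMonic_congr Fq hu
    have e0 : -(y * c) - -(y * (c %ₘ u)) = -y * (c - c %ₘ u) := by ring
    rw [e0]
    exact Dvd.dvd.mul_left (self_sub_modByMonic Fq hu c) _
  by_cases hc : (c %ₘ u).degree < (bb : WithBot ℕ)
  · rw [if_pos hc]
    have hone : ∀ y : W Fq m, psiInf Fq (-(y.1 * c)) u = 1 := by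
      intro y
      rw [psiInf_monic Fq hu, hcongr]
      have hidx : m + bb - 1 ≤ u.natDegree - 1 := by omega
      have hdeg : (y.1 * (c %ₘ u)).degree < ((m + bb - 1 : ℕ) : WithBot ℕ) :=
        degree_mul_lt2 Fq hm hbb y.2 hc
      have hdeg2 : (-(y.1 * (c %ₘ u))).degree < ((u.natDegree : ℕ) : WithBot ℕ) := by
        rw [degree_neg]
        refine lt_of_lt_of_le hdeg ?_
        exact_mod_cast (by omega : m + bb - 1 ≤ u.natDegree)
      rw [(modByMonic_eq_self_iff hu).2
        (by rw [degree_eq_natDegree hu.ne_zero]; exact hdeg2)]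
      have hco : (-(y.1 * (c %ₘ u))).coeff (u.natDegree - 1) = 0 := by
        apply coeff_eq_zero_of_degree_lt
        rw [degree_neg]
        refine lt_of_lt_of_le hdeg ?_
        exact_mod_cast hidx
      rw [hco, Efn_zero]
    rw [Finset.sum_congr rfl (fun y _ => hone y), Finset.sum_const, Finset.card_univ,
      card_W, nsmul_eq_mul, mul_one]
    push_cast
    ring
  · rw [if_neg hc]
    set r := c %ₘ u with hr
    have hrne : r ≠ 0 := by
      intro h0
      exact hc (by rw [h0, degree_zero]; exact WithBot.bot_lt_coe _)
    have hre : bb ≤ r.natDegree := by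
      by_contra hlt
      push_neg at hlt
      exact hc (by rw [degree_eq_natDegree hrne, Nat.cast_lt]; exact hlt)
    have hrd : r.natDegree < u.natDegree := by
      apply natDegree_lt_of_degree_lt Fq hrne
      have := degree_modByMonic_lt c hu
      rwa [degree_eq_natDegree hu.ne_zero] at this
    set j := u.natDegree - 1 - r.natDegree with hj
    have hjm : j < m := by omega
    obtain ⟨c₀, hc₀⟩ := Efn_exists_ne_one Fq
    have hc₀0 : c₀ ≠ 0 := fun h0 => hc₀ (h0 ▸ Efn_zero Fq)
    have hlc : r.leadingCoeff ≠ 0 := leadingCoeff_ne_zero.2 hrne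
    set a : Fq := -c₀ / r.leadingCoeff with ha
    have ha0 : a ≠ 0 := div_ne_zero (neg_ne_zero.2 hc₀0) hlc
    set y₀ : Polynomial Fq := C a * X ^ j with hy₀
    have hy₀d : y₀.degree = (j : WithBot ℕ) := degree_C_mul_X_pow j ha0
    have hy₀m : y₀.degree < (m : WithBot ℕ) := by
      rw [hy₀d]; exact_mod_cast hjm
    have hkey : psiInf Fq (-(y₀ * c)) u = Efn Fq c₀ := by
      rw [psiInf_monic Fq hu, hcongr]
      have hdeg : (-(y₀ * r)).degree ≤ ((u.natDegree - 1 : ℕ) : WithBot ℕ) := by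
        rw [degree_neg, degree_mul, hy₀d, degree_eq_natDegree hrne, ← Nat.cast_add,
          Nat.cast_le]
        omega
      rw [(modByMonic_eq_self_iff hu).2 (lt_of_le_of_lt hdeg
        (by rw [degree_eq_natDegree hu.ne_zero, Nat.cast_lt]; omega))]
      have hval : (-(y₀ * r)).coeff (u.natDegree - 1) = c₀ := by
        rw [coeff_neg]
        have e0 : y₀ * r = (C a * r) * X ^ j := by ring
        rw [e0, coeff_mul_X_pow', if_pos (by omega : j ≤ u.natDegree - 1)]
        have e1 : u.natDegree - 1 - j = r.natDegree := by omega
        rw [e1, coeff_C_mul]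
        have : r.coeff r.natDegree = r.leadingCoeff := rfl
        rw [this, ha, div_mul_cancel₀ _ hlc, neg_neg]
      rw [hval]
    have hFadd : ∀ y z : Polynomial Fq,
        psiInf Fq (-((y + z) * c)) u = psiInf Fq (-(y * c)) u * psiInf Fq (-(z * c)) u := by
      intro y z
      have e0 : -((y + z) * c) = -(y * c) + -(z * c) := by ring
      rw [e0, psiInf_add Fq hu]
    set τ : W Fq m ≃ W Fq m :=
      { toFun := fun y => ⟨y.1 + y₀, lt_of_le_of_lt (degree_add_le _ _) (max_lt y.2 hy₀m)⟩
        invFun := fun y => ⟨y.1 - y₀, lt_of_le_of_lt (degree_sub_le _ _) (max_lt y.2 hy₀m)⟩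
        left_inv := fun y => Subtype.ext (by ring)
        right_inv := fun y => Subtype.ext (by ring) } with hτ
    set S : ℂ := ∑ y : W Fq m, psiInf Fq (-(y.1 * c)) u with hS
    have hsum : S = ∑ y : W Fq m, psiInf Fq (-((τ y).1 * c)) u :=
      (Equiv.sum_comp τ (fun y => psiInf Fq (-(y.1 * c)) u)).symm
    have htrans : ∑ y : W Fq m, psiInf Fq (-((τ y).1 * c)) u = Efn Fq c₀ * S := by
      rw [hS, Finset.mul_sum]
      apply Finset.sum_congr rfl
      intro y _
      show psiInf Fq (-((y.1 + y₀) * c)) u = Efn Fq c₀ * psiInf Fq (-(y.1 * c)) u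
      rw [hFadd y.1 y₀, hkey, mul_comm]
    have heq : S = Efn Fq c₀ * S := hsum.trans htrans
    have hz : (1 - Efn Fq c₀) * S = 0 := by linear_combination heq
    rcases mul_eq_zero.1 hz with h0 | h0
    · exact absurd (by linear_combination -h0) hc₀
    · exact h0

end Orth


section CRT

set_option linter.unusedSectionVars false

lemma mk_congr {p x y : Polynomial Fq} (h : p ∣ x - y) :
    Ideal.Quotient.mk (Ideal.span {p}) x = Ideal.Quotient.mk (Ideal.span {p}) y :=
  Ideal.Quotient.eq.2 (Ideal.mem_span_singleton.2 h)

lemma mk_eval_congr {k : ℕ} (I : Ideal (Polynomial Fq)) (x y : Fin k → Polynomial Fq)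
    (h : ∀ i, Ideal.Quotient.mk I (x i) = Ideal.Quotient.mk I (y i))
    (G : MvPolynomial (Fin k) (Polynomial Fq)) :
    Ideal.Quotient.mk I (MvPolynomial.eval x G)
      = Ideal.Quotient.mk I (MvPolynomial.eval y G) := by
  have e : ∀ z : Fin k → Polynomial Fq,
      Ideal.Quotient.mk I (MvPolynomial.eval z G)
        = MvPolynomial.eval₂ (Ideal.Quotient.mk I)
            (fun i => Ideal.Quotient.mk I (z i)) G := by
    intro z
    rw [← MvPolynomial.eval₂_id (g := z), MvPolynomial.eval₂_comp_left, RingHom.comp_id]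
    rfl
  rw [e x, e y]
  congr 1
  funext i
  exact h i

lemma prod_ite_all {k : ℕ} (P : Fin k → Prop) [DecidablePred P] (v : ℂ) :
    (∏ i, if P i then v else 0) = if (∀ i, P i) then v ^ k else 0 := by
  by_cases hP : ∀ i, P i
  · rw [if_pos hP, Finset.prod_congr rfl (fun i _ => if_pos (hP i)), Finset.prod_const,
      Finset.card_univ, Fintype.card_fin]
  · obtain ⟨i, hi⟩ := not_forall.1 hP
    rw [if_neg hP]
    exact Finset.prod_eq_zero (Finset.mem_univ i) (if_neg hi)

end CRT


section CharSumEq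

set_option linter.unusedSectionVars false

lemma charSum_eq {n : ℕ} (G : MvPolynomial (Fin (n + 1)) (Polynomial Fq))
    (π : Polynomial Fq) (hπ0 : π ≠ 0)
    (χ : MulChar (Polynomial Fq ⧸ Ideal.span {π}) ℂ)
    (w : Fin (n + 1) → Polynomial Fq) :
    charSum Fq G π χ w
      = ∑ a : Fin (n + 1) → W Fq π.natDegree,
          χ (Ideal.Quotient.mk (Ideal.span {π}) (MvPolynomial.eval (fun i => (a i).1) G))
            * psiInf Fq (-(∑ i, w i * (a i).1)) π := by
  unfold charSum
  rw [finsum_tup Fq (n + 1) π.degree π.natDegree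
    (fun y => by rw [degree_eq_natDegree hπ0])]
  rfl

end CharSumEq

end Stmt10

open Polynomial Finset Stmt10 in
/-- **Completion of the incomplete character sum** (Proposition 6.4 of the paper):
for distinct monic irreducibles `π ≠ π′`, non-principal characters `χ_π, χ_{π′}`,
any `G ∈ 𝔽_q[T][X_0,…,X_n]` and `0 < b < deg(ππ′)`,
`Σ_{deg x < b} χ_π(G(x)) χ_{π′}(G(x))
  = q^{(n+1)(b − deg ππ′)} Σ_{deg x < deg ππ′ − b} S_G(π̄′x, χ_π) S_G(π̄x, χ_{π′})`,
where `π π̄ ≡ 1 (mod π′)` and `π′ π̄′ ≡ 1 (mod π)`. -/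
theorem statement10 (Fq : Type) [Field Fq] [Fintype Fq]
    (hq : Odd (Fintype.card Fq)) (n : ℕ) (hn : 1 ≤ n)
    (π π' : Polynomial Fq) (hπm : π.Monic) (hπ'm : π'.Monic)
    (hπ : Irreducible π) (hπ' : Irreducible π') (hne : π ≠ π')
    (χ : MulChar (Polynomial Fq ⧸ Ideal.span {π}) ℂ) (hχ : χ ≠ 1)
    (χ' : MulChar (Polynomial Fq ⧸ Ideal.span {π'}) ℂ) (hχ' : χ' ≠ 1)
    (G : MvPolynomial (Fin (n + 1)) (Polynomial Fq))
    (b : ℕ) (hb : 0 < b) (hbd : b < (π * π').natDegree)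
    (pbar pbar' : Polynomial Fq)
    (hpbar : π' ∣ (π * pbar - 1))
    (hpbar' : π ∣ (π' * pbar' - 1)) :
    (∑ᶠ x : {x : Fin (n + 1) → Polynomial Fq // ∀ i, (x i).degree < (b : WithBot ℕ)},
        χ (Ideal.Quotient.mk (Ideal.span {π}) (MvPolynomial.eval x.1 G))
          * χ' (Ideal.Quotient.mk (Ideal.span {π'}) (MvPolynomial.eval x.1 G)))
      = (Fintype.card Fq : ℂ) ^ (((n : ℤ) + 1) * ((b : ℤ) - ((π * π').natDegree : ℤ)))
        * ∑ᶠ x : {x : Fin (n + 1) → Polynomial Fq //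
            ∀ i, (x i).degree < (((π * π').natDegree - b : ℕ) : WithBot ℕ)},
            charSum Fq G π χ (fun i => pbar' * x.1 i)
              * charSum Fq G π' χ' (fun i => pbar * x.1 i) := by
  classical
  have hπ0 : π ≠ 0 := hπm.ne_zero
  have hπ'0 : π' ≠ 0 := hπ'm.ne_zero
  have h1 : 1 ≤ π.natDegree := hπ.natDegree_pos
  have h2 : 1 ≤ π'.natDegree := hπ'.natDegree_pos
  have hmon : (π * π').Monic := hπm.mul hπ'm
  have hdnat : (π * π').natDegree = π.natDegree + π'.natDegree := natDegree_mul hπ0 hπ'0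
  set m : ℕ := (π * π').natDegree - b with hmdef
  have hm0 : 0 < m := by omega
  have hmb : m + b = (π * π').natDegree := by omega
  -- coprimality
  have hndvd : ¬ π ∣ π' := by
    intro hdvd
    exact hne (eq_of_monic_of_associated hπm hπ'm (hπ.associated_of_dvd hπ' hdvd))
  have hcop : IsCoprime π π' := (hπ.coprime_iff_not_dvd).2 hndvd
  have hdegmul : (π * π').degree = (((π * π').natDegree : ℕ) : WithBot ℕ) :=
    degree_eq_natDegree hmon.ne_zero
  have hdegπ : π.degree = ((π.natDegree : ℕ) : WithBot ℕ) := degree_eq_natDegree hπ0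
  have hdegπ' : π'.degree = ((π'.natDegree : ℕ) : WithBot ℕ) := degree_eq_natDegree hπ'0
  -- CRT facts
  have hccmodπ : ∀ a a' : Polynomial Fq, π ∣ (π' * pbar' * a + π * pbar * a') - a := by
    intro a a'
    obtain ⟨t, ht⟩ := hpbar'
    exact ⟨t * a + pbar * a', by linear_combination a * ht⟩
  have hccmodπ' : ∀ a a' : Polynomial Fq, π' ∣ (π' * pbar' * a + π * pbar * a') - a' := by
    intro a a'
    obtain ⟨t, ht⟩ := hpbar
    exact ⟨pbar' * a + t * a', by linear_combination a' * ht⟩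
  have hxmod : ∀ x : Polynomial Fq, x.degree < (b : WithBot ℕ) →
      ((π' * pbar' * (x %ₘ π) + π * pbar * (x %ₘ π')) %ₘ (π * π')) = x := by
    intro x hx
    have hπd : π ∣ (π' * pbar' * (x %ₘ π) + π * pbar * (x %ₘ π')) - x := by
      have e1 := hccmodπ (x %ₘ π) (x %ₘ π')
      have e2 : π ∣ (x %ₘ π) - x := dvd_sub_comm.1 (self_sub_modByMonic Fq hπm x)
      have := dvd_add e1 e2
      rwa [sub_add_sub_cancel] at this
    have hπ'd : π' ∣ (π' * pbar' * (x %ₘ π) + π * pbar * (x %ₘ π')) - x := by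
      have e1 := hccmodπ' (x %ₘ π) (x %ₘ π')
      have e2 : π' ∣ (x %ₘ π') - x := dvd_sub_comm.1 (self_sub_modByMonic Fq hπ'm x)
      have := dvd_add e1 e2
      rwa [sub_add_sub_cancel] at this
    rw [modByMonic_congr Fq hmon (hcop.mul_dvd hπd hπ'd)]
    apply (modByMonic_eq_self_iff hmon).2
    rw [hdegmul]
    exact lt_of_lt_of_le hx (by exact_mod_cast (by omega : b ≤ (π * π').natDegree))
  have hmodπ : ∀ a a' : Polynomial Fq, a.degree < ((π.natDegree : ℕ) : WithBot ℕ) →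
      ((π' * pbar' * a + π * pbar * a') %ₘ (π * π')) %ₘ π = a := by
    intro a a' hdeg
    have e0 : π ∣ ((π' * pbar' * a + π * pbar * a') %ₘ (π * π'))
        - (π' * pbar' * a + π * pbar * a') := by
      refine dvd_sub_comm.1 (dvd_trans (dvd_mul_right π π') ?_)
      exact self_sub_modByMonic Fq hmon _
    rw [modByMonic_congr Fq hπm e0, modByMonic_congr Fq hπm (hccmodπ a a')]
    exact (modByMonic_eq_self_iff hπm).2 (by rwa [hdegπ])
  have hmodπ' : ∀ a a' : Polynomial Fq, a'.degree < ((π'.natDegree : ℕ) : WithBot ℕ) →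
      ((π' * pbar' * a + π * pbar * a') %ₘ (π * π')) %ₘ π' = a' := by
    intro a a' hdeg
    have e0 : π' ∣ ((π' * pbar' * a + π * pbar * a') %ₘ (π * π'))
        - (π' * pbar' * a + π * pbar * a') := by
      refine dvd_sub_comm.1 (dvd_trans (dvd_mul_left π' π) ?_)
      exact self_sub_modByMonic Fq hmon _
    rw [modByMonic_congr Fq hπ'm e0, modByMonic_congr Fq hπ'm (hccmodπ' a a')]
    exact (modByMonic_eq_self_iff hπ'm).2 (by rwa [hdegπ'])
  -- switch to Fintype sums
  rw [finsum_tup Fq (n + 1) ((b : ℕ) : WithBot ℕ) b (fun y => Iff.rfl)]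
  rw [finsum_tup Fq (n + 1) ((m : ℕ) : WithBot ℕ) m (fun y => Iff.rfl)]
  set qc : ℂ := (Fintype.card Fq : ℂ) with hqc
  have hq0 : qc ≠ 0 := Nat.cast_ne_zero.2 Fintype.card_ne_zero
  set kap : ℤ := ((n : ℤ) + 1) * ((b : ℤ) - ((π * π').natDegree : ℤ)) with hkap
  have hconst : qc ^ kap * qc ^ (m * (n + 1)) = 1 := by
    rw [← zpow_natCast qc (m * (n + 1)), ← zpow_add₀ hq0]
    have hexp : kap + ((m * (n + 1) : ℕ) : ℤ) = 0 := by
      have hmz : (m : ℤ) = ((π * π').natDegree : ℤ) - (b : ℤ) := by omega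
      rw [hkap]
      push_cast
      linear_combination ((n : ℤ) + 1) * hmz
    rw [hexp, zpow_zero]
  -- abbreviations
  set vv : (Fin (n + 1) → W Fq π.natDegree) → (Fin (n + 1) → W Fq π'.natDegree) → ℂ :=
    fun a a' =>
      χ (Ideal.Quotient.mk (Ideal.span {π}) (MvPolynomial.eval (fun i => (a i).1) G))
        * χ' (Ideal.Quotient.mk (Ideal.span {π'}) (MvPolynomial.eval (fun i => (a' i).1) G))
    with hvv
  set cci : (Fin (n + 1) → W Fq π.natDegree) → (Fin (n + 1) → W Fq π'.natDegree)
      → Fin (n + 1) → Polynomial Fq :=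
    fun a a' i => π' * pbar' * (a i).1 + π * pbar * (a' i).1 with hcci
  -- step: expand the two charSums
  have hz : ∀ z : Fin (n + 1) → W Fq m,
      charSum Fq G π χ (fun i => pbar' * (z i).1)
          * charSum Fq G π' χ' (fun i => pbar * (z i).1)
        = ∑ a : Fin (n + 1) → W Fq π.natDegree, ∑ a' : Fin (n + 1) → W Fq π'.natDegree,
            (χ (Ideal.Quotient.mk (Ideal.span {π}) (MvPolynomial.eval (fun i => (a i).1) G))
                * psiInf Fq (-(∑ i, (pbar' * (z i).1) * (a i).1)) π)
              * (χ' (Ideal.Quotient.mk (Ideal.span {π'})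
                    (MvPolynomial.eval (fun i => (a' i).1) G))
                  * psiInf Fq (-(∑ i, (pbar * (z i).1) * (a' i).1)) π') := by
    intro z
    rw [charSum_eq Fq G π hπ0 χ, charSum_eq Fq G π' hπ'0 χ', Finset.sum_mul_sum]
  have hψ : ∀ (z : Fin (n + 1) → W Fq m) (a : Fin (n + 1) → W Fq π.natDegree)
      (a' : Fin (n + 1) → W Fq π'.natDegree),
      psiInf Fq (-(∑ i, (pbar' * (z i).1) * (a i).1)) π
          * psiInf Fq (-(∑ i, (pbar * (z i).1) * (a' i).1)) π'
        = ∏ i, psiInf Fq (-((z i).1 * cci a a' i)) (π * π') := by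
    intro z a a'
    rw [psiInf_split Fq hπm hπ'm h1 h2]
    rw [show (-(∑ i, (pbar' * (z i).1) * (a i).1)) * π'
          + (-(∑ i, (pbar * (z i).1) * (a' i).1)) * π
        = -(∑ i, (z i).1 * cci a a' i) by
      rw [neg_mul, neg_mul, ← neg_add, Finset.sum_mul, Finset.sum_mul,
        ← Finset.sum_add_distrib]
      congr 1
      apply Finset.sum_congr rfl
      intro i _
      rw [hcci]
      ring]
    exact psiInf_sum Fq hmon univ _
  have hz2 : ∀ (a : Fin (n + 1) → W Fq π.natDegree) (a' : Fin (n + 1) → W Fq π'.natDegree),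
      (∑ z : Fin (n + 1) → W Fq m,
        (χ (Ideal.Quotient.mk (Ideal.span {π}) (MvPolynomial.eval (fun i => (a i).1) G))
            * psiInf Fq (-(∑ i, (pbar' * (z i).1) * (a i).1)) π)
          * (χ' (Ideal.Quotient.mk (Ideal.span {π'})
                (MvPolynomial.eval (fun i => (a' i).1) G))
              * psiInf Fq (-(∑ i, (pbar * (z i).1) * (a' i).1)) π'))
        = vv a a' * (if (∀ i, ((cci a a' i) %ₘ (π * π')).degree < (b : WithBot ℕ))
            then qc ^ (m * (n + 1)) else 0) := by
    intro a a'
    have e1 : ∀ z : Fin (n + 1) → W Fq m,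
        (χ (Ideal.Quotient.mk (Ideal.span {π}) (MvPolynomial.eval (fun i => (a i).1) G))
            * psiInf Fq (-(∑ i, (pbar' * (z i).1) * (a i).1)) π)
          * (χ' (Ideal.Quotient.mk (Ideal.span {π'})
                (MvPolynomial.eval (fun i => (a' i).1) G))
              * psiInf Fq (-(∑ i, (pbar * (z i).1) * (a' i).1)) π')
        = vv a a' * (psiInf Fq (-(∑ i, (pbar' * (z i).1) * (a i).1)) π
            * psiInf Fq (-(∑ i, (pbar * (z i).1) * (a' i).1)) π') := by
      intro z
      rw [hvv]
      ring
    rw [Finset.sum_congr rfl (fun z _ => e1 z), ← Finset.mul_sum]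
    congr 1
    rw [Finset.sum_congr rfl (fun z _ => hψ z a a')]
    have e2 : ∑ z : Fin (n + 1) → W Fq m, ∏ i, psiInf Fq (-((z i).1 * cci a a' i)) (π * π')
        = ∏ i, ∑ y : W Fq m, psiInf Fq (-(y.1 * cci a a' i)) (π * π') := by
      have hps := Finset.prod_univ_sum (fun _ : Fin (n + 1) => (univ : Finset (W Fq m)))
        (fun i y => psiInf Fq (-(y.1 * cci a a' i)) (π * π'))
      rw [Fintype.piFinset_univ] at hps
      exact hps.symm
    rw [e2, Finset.prod_congr rfl
      (fun i _ => orth Fq hmon hm0 hb hmb (cci a a' i)), prod_ite_all, ← pow_mul]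
  -- the bijection
  have hbij : ∑ p ∈ Finset.univ.filter
        (fun p : (Fin (n + 1) → W Fq π.natDegree) × (Fin (n + 1) → W Fq π'.natDegree) =>
          ∀ i, ((cci p.1 p.2 i) %ₘ (π * π')).degree < (b : WithBot ℕ)), vv p.1 p.2
      = ∑ x : Fin (n + 1) → W Fq b,
          χ (Ideal.Quotient.mk (Ideal.span {π}) (MvPolynomial.eval (fun i => (x i).1) G))
            * χ' (Ideal.Quotient.mk (Ideal.span {π'})
                (MvPolynomial.eval (fun i => (x i).1) G)) := by
    symm
    refine Finset.sum_bij (fun (x : Fin (n + 1) → W Fq b) _ =>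
      ((fun i => ⟨(x i).1 %ₘ π, by
          have := degree_modByMonic_lt (x i).1 hπm
          rwa [hdegπ] at this⟩,
        fun i => ⟨(x i).1 %ₘ π', by
          have := degree_modByMonic_lt (x i).1 hπ'm
          rwa [hdegπ'] at this⟩) :
        (Fin (n + 1) → W Fq π.natDegree) × (Fin (n + 1) → W Fq π'.natDegree)))
      ?_ ?_ ?_ ?_
    · intro x _
      rw [Finset.mem_filter]
      refine ⟨Finset.mem_univ _, fun i => ?_⟩
      show (((π' * pbar' * ((x i).1 %ₘ π) + π * pbar * ((x i).1 %ₘ π')) %ₘ (π * π')).degree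
        < (b : WithBot ℕ))
      rw [hxmod (x i).1 (x i).2]
      exact (x i).2
    · intro x hx y hy heq
      funext i
      apply Subtype.ext
      have e1 : (x i).1 %ₘ π = (y i).1 %ₘ π := by
        have := congrArg (fun p => ((p.1 : Fin (n + 1) → W Fq π.natDegree) i).1) heq
        simpa using this
      have e2 : (x i).1 %ₘ π' = (y i).1 %ₘ π' := by
        have := congrArg (fun p => ((p.2 : Fin (n + 1) → W Fq π'.natDegree) i).1) heq
        simpa using this
      have hπd : π ∣ (x i).1 - (y i).1 := by
        obtain ⟨t, ht⟩ := self_sub_modByMonic Fq hπm (x i).1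
        obtain ⟨s, hs⟩ := self_sub_modByMonic Fq hπm (y i).1
        exact ⟨t - s, by linear_combination ht - hs + e1⟩
      have hπ'd : π' ∣ (x i).1 - (y i).1 := by
        obtain ⟨t, ht⟩ := self_sub_modByMonic Fq hπ'm (x i).1
        obtain ⟨s, hs⟩ := self_sub_modByMonic Fq hπ'm (y i).1
        exact ⟨t - s, by linear_combination ht - hs + e2⟩
      have hdlt : ((x i).1 - (y i).1).degree < (π * π').degree := by
        rw [hdegmul]
        refine lt_of_le_of_lt (degree_sub_le _ _) (lt_of_lt_of_le (max_lt (x i).2 (y i).2) ?_)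
        exact_mod_cast (by omega : b ≤ (π * π').natDegree)
      have := eq_zero_of_dvd_of_degree_lt (hcop.mul_dvd hπd hπ'd) hdlt
      exact sub_eq_zero.1 this
    · rintro ⟨a, a'⟩ hp
      rw [Finset.mem_filter] at hp
      refine ⟨fun i => ⟨(cci a a' i) %ₘ (π * π'), hp.2 i⟩, Finset.mem_univ _, ?_⟩
      refine Prod.ext (funext fun i => Subtype.ext ?_) (funext fun i => Subtype.ext ?_)
      · exact hmodπ (a i).1 (a' i).1 (a i).2
      · exact hmodπ' (a i).1 (a' i).1 (a' i).2
    · intro x _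
      rw [hvv]
      show _ = χ (Ideal.Quotient.mk (Ideal.span {π})
            (MvPolynomial.eval (fun i => (x i).1 %ₘ π) G))
          * χ' (Ideal.Quotient.mk (Ideal.span {π'})
            (MvPolynomial.eval (fun i => (x i).1 %ₘ π') G))
      rw [mk_eval_congr Fq (Ideal.span {π}) (fun i => (x i).1) (fun i => (x i).1 %ₘ π)
        (fun i => mk_congr Fq (self_sub_modByMonic Fq hπm (x i).1)) G]
      rw [mk_eval_congr Fq (Ideal.span {π'}) (fun i => (x i).1) (fun i => (x i).1 %ₘ π')
        (fun i => mk_congr Fq (self_sub_modByMonic Fq hπ'm (x i).1)) G]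
  -- final calc
  have main : qc ^ kap * (∑ z : Fin (n + 1) → W Fq m,
        charSum Fq G π χ (fun i => pbar' * (z i).1)
          * charSum Fq G π' χ' (fun i => pbar * (z i).1))
      = ∑ x : Fin (n + 1) → W Fq b,
          χ (Ideal.Quotient.mk (Ideal.span {π}) (MvPolynomial.eval (fun i => (x i).1) G))
            * χ' (Ideal.Quotient.mk (Ideal.span {π'})
                (MvPolynomial.eval (fun i => (x i).1) G)) := by
    calc qc ^ kap * (∑ z : Fin (n + 1) → W Fq m,
          charSum Fq G π χ (fun i => pbar' * (z i).1)
            * charSum Fq G π' χ' (fun i => pbar * (z i).1))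
        = qc ^ kap * (∑ z : Fin (n + 1) → W Fq m, ∑ a : Fin (n + 1) → W Fq π.natDegree,
            ∑ a' : Fin (n + 1) → W Fq π'.natDegree,
            (χ (Ideal.Quotient.mk (Ideal.span {π}) (MvPolynomial.eval (fun i => (a i).1) G))
                * psiInf Fq (-(∑ i, (pbar' * (z i).1) * (a i).1)) π)
              * (χ' (Ideal.Quotient.mk (Ideal.span {π'})
                    (MvPolynomial.eval (fun i => (a' i).1) G))
                  * psiInf Fq (-(∑ i, (pbar * (z i).1) * (a' i).1)) π')) := by
          rw [Finset.sum_congr rfl (fun z _ => hz z)]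
      _ = qc ^ kap * (∑ a : Fin (n + 1) → W Fq π.natDegree, ∑ z : Fin (n + 1) → W Fq m,
            ∑ a' : Fin (n + 1) → W Fq π'.natDegree,
            (χ (Ideal.Quotient.mk (Ideal.span {π}) (MvPolynomial.eval (fun i => (a i).1) G))
                * psiInf Fq (-(∑ i, (pbar' * (z i).1) * (a i).1)) π)
              * (χ' (Ideal.Quotient.mk (Ideal.span {π'})
                    (MvPolynomial.eval (fun i => (a' i).1) G))
                  * psiInf Fq (-(∑ i, (pbar * (z i).1) * (a' i).1)) π')) := by
          rw [Finset.sum_comm]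
      _ = qc ^ kap * (∑ a : Fin (n + 1) → W Fq π.natDegree,
            ∑ a' : Fin (n + 1) → W Fq π'.natDegree, ∑ z : Fin (n + 1) → W Fq m,
            (χ (Ideal.Quotient.mk (Ideal.span {π}) (MvPolynomial.eval (fun i => (a i).1) G))
                * psiInf Fq (-(∑ i, (pbar' * (z i).1) * (a i).1)) π)
              * (χ' (Ideal.Quotient.mk (Ideal.span {π'})
                    (MvPolynomial.eval (fun i => (a' i).1) G))
                  * psiInf Fq (-(∑ i, (pbar * (z i).1) * (a' i).1)) π')) := by
          rw [Finset.sum_congr rfl (fun a _ => Finset.sum_comm)]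
      _ = qc ^ kap * (∑ a : Fin (n + 1) → W Fq π.natDegree,
            ∑ a' : Fin (n + 1) → W Fq π'.natDegree,
            vv a a' * (if (∀ i, ((cci a a' i) %ₘ (π * π')).degree < (b : WithBot ℕ))
              then qc ^ (m * (n + 1)) else 0)) := by
          rw [Finset.sum_congr rfl
            (fun a _ => Finset.sum_congr rfl (fun a' _ => hz2 a a'))]
      _ = qc ^ kap * (∑ p : (Fin (n + 1) → W Fq π.natDegree) × (Fin (n + 1) → W Fq π'.natDegree),
            vv p.1 p.2 * (if (∀ i, ((cci p.1 p.2 i) %ₘ (π * π')).degree < (b : WithBot ℕ))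
              then qc ^ (m * (n + 1)) else 0)) := by
          rw [Fintype.sum_prod_type]
      _ = qc ^ kap * (qc ^ (m * (n + 1))
            * ∑ p : (Fin (n + 1) → W Fq π.natDegree) × (Fin (n + 1) → W Fq π'.natDegree),
            (if (∀ i, ((cci p.1 p.2 i) %ₘ (π * π')).degree < (b : WithBot ℕ))
              then vv p.1 p.2 else 0)) := by
          congr 1
          rw [Finset.mul_sum]
          apply Finset.sum_congr rfl
          intro p _
          split_ifs with hcp
          · ring
          · ring
      _ = ∑ p : (Fin (n + 1) → W Fq π.natDegree) × (Fin (n + 1) → W Fq π'.natDegree),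
            (if (∀ i, ((cci p.1 p.2 i) %ₘ (π * π')).degree < (b : WithBot ℕ))
              then vv p.1 p.2 else 0) := by
          rw [← mul_assoc, hconst, one_mul]
      _ = ∑ p ∈ Finset.univ.filter
            (fun p : (Fin (n + 1) → W Fq π.natDegree) × (Fin (n + 1) → W Fq π'.natDegree) =>
              ∀ i, ((cci p.1 p.2 i) %ₘ (π * π')).degree < (b : WithBot ℕ)), vv p.1 p.2 :=
          (Finset.sum_filter _ _).symm
      _ = ∑ x : Fin (n + 1) → W Fq b,
            χ (Ideal.Quotient.mk (Ideal.span {π}) (MvPolynomial.eval (fun i => (x i).1) G))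
              * χ' (Ideal.Quotient.mk (Ideal.span {π'})
                  (MvPolynomial.eval (fun i => (x i).1) G)) := hbij
  exact main.symm
end
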